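/- arXiv:2208.02416 — 6 statements merged into one kernel-verified Lean document; each statement's English description precedes it below -/
import Mathlib

section
/- Let M ∈ C^{p×p} be a block matrix M = [[A, B],[C, D]] with operator norm ‖M‖ ≤ 1, where A ∈ C^{ℓ×m} with m < ℓ (A occupies the first ℓ rows and first m columns). Then |det M| ≤ ‖B‖, where ‖B‖ is the operator norm of the block B. -/
open Finset
open Matrix

noncomputable def opNorm {a b : ℕ} (M : Matrix (Fin a) (Fin b) ℂ) : ℝ :=
  ‖LinearMap.toContinuousLinearMap (Matrix.toEuclideanLin M)‖

lemma norm_toEuclideanLin_apply_le {a b : ℕ} (A : Matrix (Fin a) (Fin b) ℂ)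
    (x : EuclideanSpace ℂ (Fin b)) :
    ‖Matrix.toEuclideanLin A x‖ ≤ opNorm A * ‖x‖ := by
  have := (LinearMap.toContinuousLinearMap (Matrix.toEuclideanLin A)).le_opNorm x
  simpa [opNorm] using this

lemma opNorm_conjTranspose {a b : ℕ} (A : Matrix (Fin a) (Fin b) ℂ) :
    opNorm Aᴴ = opNorm A := by
  unfold opNorm
  rw [Matrix.toEuclideanLin_conjTranspose_eq_adjoint,
    LinearMap.adjoint_toContinuousLinearMap]
  exact LinearIsometryEquiv.norm_map ContinuousLinearMap.adjoint _

lemma sum_extend {α : Type*} [AddCommMonoid α] {k n : ℕ} (h : k ≤ n) (f : Fin n → α)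
    (hf : ∀ i : Fin n, k ≤ (i : ℕ) → f i = 0) :
    ∑ i, f i = ∑ i : Fin k, f (Fin.castLE h i) := by
  set g : ℕ → α := fun i => if hi : i < n then f ⟨i, hi⟩ else 0 with hg
  have h1 : ∑ i, f i = ∑ i ∈ Finset.range n, g i := by
    rw [Finset.sum_range fun i => g i]
    apply Finset.sum_congr rfl
    intro i _
    simp [hg, i.isLt]
  have h2 : ∑ i : Fin k, f (Fin.castLE h i) = ∑ i ∈ Finset.range k, g i := by
    rw [Finset.sum_range fun i => g i]
    apply Finset.sum_congr rfl
    intro i _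
    have : (i : ℕ) < n := lt_of_lt_of_le i.isLt h
    simp only [hg, this, dif_pos]
    congr 1
  rw [h1, h2]
  apply (Finset.sum_subset (Finset.range_subset_range.mpr h) _).symm
  intro x hx hxk
  simp only [Finset.mem_range, not_lt] at hx hxk
  simp only [hg, hx, dif_pos]
  exact hf _ hxk

lemma sum_tail {α : Type*} [AddCommMonoid α] {m n : ℕ} (h : m ≤ n) (f : Fin n → α)
    (hf : ∀ j : Fin n, (j : ℕ) < m → f j = 0) :
    ∑ j, f j = ∑ j : Fin (n - m), f (Fin.cast (Nat.sub_add_cancel h) (j.addNat m)) := by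
  set g : ℕ → α := fun i => if hi : i < n then f ⟨i, hi⟩ else 0 with hg
  have h1 : ∑ i, f i = ∑ i ∈ Finset.range n, g i := by
    rw [Finset.sum_range fun i => g i]
    exact Finset.sum_congr rfl fun i _ => by simp [hg, i.isLt]
  have h2 : ∑ i ∈ Finset.range n, g i = ∑ i ∈ Finset.Ico m n, g i := by
    apply (Finset.sum_subset _ _).symm
    · intro x hx; simp only [Finset.mem_Ico] at hx; exact Finset.mem_range.mpr hx.2
    · intro x hx hxi
      simp only [Finset.mem_range] at hx
      simp only [Finset.mem_Ico, not_and, not_lt] at hxi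
      simp only [hg, hx, dif_pos]
      have hxm : x < m := by
        by_contra hc
        push_neg at hc
        omega
      exact hf ⟨x, hx⟩ hxm
  rw [h1, h2, Finset.sum_Ico_eq_sum_range]
  rw [Finset.sum_range fun i => g (m + i)]
  apply Finset.sum_congr rfl
  intro i _
  have hi : m + (i : ℕ) < n := by omega
  simp only [hg, hi, dif_pos]
  congr 1
  simp [Fin.ext_iff]
  omega

lemma toEuclideanLin_coord {a b : ℕ} (A : Matrix (Fin a) (Fin b) ℂ)
    (x : EuclideanSpace ℂ (Fin b)) (j : Fin a) :
    Matrix.toEuclideanLin A x j = ∑ i, A j i * x i := by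
  simp [Matrix.toEuclideanLin_apply, Matrix.mulVec, dotProduct]

theorem block_det_bound {p ℓ m : ℕ} (hl : ℓ ≤ p) (hm : m < ℓ)
    (M : Matrix (Fin p) (Fin p) ℂ) (hM : opNorm M ≤ 1) :
    ‖M.det‖ ≤
      opNorm (Matrix.of fun (i : Fin ℓ) (j : Fin (p - m)) =>
        M (Fin.castLE hl i) (Fin.cast (by omega) (j.addNat m))) := by
  have hmp : m ≤ p := le_trans (le_of_lt hm) hl
  set B : Matrix (Fin ℓ) (Fin (p - m)) ℂ := Matrix.of fun (i : Fin ℓ) (j : Fin (p - m)) =>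
        M (Fin.castLE hl i) (Fin.cast (by omega) (j.addNat m)) with hB
  -- Step 1 : kernel vector v
  set K : Matrix (Fin m) (Fin ℓ) ℂ := Matrix.of fun (j : Fin m) (i : Fin ℓ) =>
        (starRingEnd ℂ) (M (Fin.castLE hl i) (Fin.castLE hmp j)) with hK
  obtain ⟨v, hv1, hvker⟩ :
      ∃ v : EuclideanSpace ℂ (Fin ℓ), ‖v‖ = 1 ∧
        ∀ j : Fin m, ∑ i, K j i * v i = 0 := by
    have hker : LinearMap.ker (Matrix.toEuclideanLin K) ≠ ⊥ := by
      apply LinearMap.ker_ne_bot_of_finrank_lt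
      rw [finrank_euclideanSpace_fin, finrank_euclideanSpace_fin]
      exact hm
    obtain ⟨v0, hv0mem, hv0ne⟩ := Submodule.ne_bot_iff _ |>.mp hker
    set c : ℂ := ((‖v0‖⁻¹ : ℝ) : ℂ) with hc
    refine ⟨c • v0, ?_, ?_⟩
    · rw [norm_smul]
      simp [hc, norm_ne_zero_iff.mpr hv0ne, inv_mul_cancel₀]
    · intro j
      have hv : Matrix.toEuclideanLin K v0 = 0 := LinearMap.mem_ker.mp hv0mem
      have h0 := congrFun (congrArg (WithLp.equiv 2 (Fin m → ℂ)) hv) j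
      simp only [Matrix.toEuclideanLin_apply, Matrix.mulVec, dotProduct] at h0
      have hsum : ∑ i, K j i * v0 i = 0 := by simpa [Matrix.mulVec, dotProduct] using h0
      have hterm : ∀ i : Fin ℓ, K j i * (c • v0) i = c * (K j i * v0 i) := by
        intro i
        simp [Pi.smul_apply, smul_eq_mul]
        ring
      rw [Finset.sum_congr rfl fun i _ => hterm i, ← Finset.mul_sum, hsum, mul_zero]
  -- Step 2 : the vector w
  set w : EuclideanSpace ℂ (Fin p) :=
    WithLp.toLp 2 (fun i : Fin p => if h : (i : ℕ) < ℓ then v ⟨(i : ℕ), h⟩ else 0) with hw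
  have hwi : ∀ i : Fin ℓ, w (Fin.castLE hl i) = v i := by
    intro i
    have hlt : ((Fin.castLE hl i : Fin p) : ℕ) < ℓ := by simpa using i.isLt
    simp only [hw, PiLp.toLp_apply, hlt, dif_pos, Fin.eta]
    rfl
  have hw0 : ∀ i : Fin p, ℓ ≤ (i : ℕ) → w i = 0 := by
    intro i hi; simp only [hw, PiLp.toLp_apply, Nat.not_lt.mpr hi, dif_neg, not_false_iff]
  have hw1 : ‖w‖ = 1 := by
    rw [EuclideanSpace.norm_eq w]
    have hsum : ∑ i : Fin p, ‖w i‖ ^ 2 = ∑ i : Fin ℓ, ‖v i‖ ^ 2 := by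
      rw [sum_extend hl (fun i => ‖w i‖ ^ 2)
        (fun i hi => by simp only []; rw [hw0 i hi]; simp)]
      exact Finset.sum_congr rfl fun i _ => by rw [hwi i]
    rw [hsum, ← EuclideanSpace.norm_eq, hv1]
  -- Step 3 : norm of (Mᴴ w)
  have hS : ∀ j : Fin p, Matrix.toEuclideanLin Mᴴ w j =
      ∑ i : Fin ℓ, (starRingEnd ℂ) (M (Fin.castLE hl i) j) * v i := by
    intro j
    rw [toEuclideanLin_coord]
    rw [sum_extend hl (fun i => Mᴴ j i * w i)
      (fun i hi => by simp only []; rw [hw0 i hi, mul_zero])]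
    apply Finset.sum_congr rfl
    intro i _
    rw [hwi i, Matrix.conjTranspose_apply]
    rfl
  have hS0 : ∀ j : Fin p, (j : ℕ) < m → Matrix.toEuclideanLin Mᴴ w j = 0 := by
    intro j hj
    rw [hS j]
    have hcast : Fin.castLE hmp ⟨(j : ℕ), hj⟩ = j := Fin.ext rfl
    have := hvker ⟨(j : ℕ), hj⟩
    simpa [hK, hcast] using this
  have hgw : ‖Matrix.toEuclideanLin Mᴴ w‖ ≤ opNorm B := by
    have hcoord : ∀ jj : Fin (p - m),
        Matrix.toEuclideanLin Bᴴ v jj =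
          Matrix.toEuclideanLin Mᴴ w (Fin.cast (Nat.sub_add_cancel hmp) (jj.addNat m)) := by
      intro jj
      rw [toEuclideanLin_coord, hS]
      apply Finset.sum_congr rfl
      intro i _
      rw [Matrix.conjTranspose_apply]
      rfl
    have hnorm : ‖Matrix.toEuclideanLin Mᴴ w‖ = ‖Matrix.toEuclideanLin Bᴴ v‖ := by
      rw [EuclideanSpace.norm_eq, EuclideanSpace.norm_eq]
      congr 1
      rw [sum_tail hmp (fun j => ‖Matrix.toEuclideanLin Mᴴ w j‖ ^ 2)
        (fun j hj => by simp only []; rw [hS0 j hj]; simp)]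
      exact Finset.sum_congr rfl fun jj _ => by rw [hcoord jj]
    rw [hnorm]
    calc ‖Matrix.toEuclideanLin Bᴴ v‖ ≤ opNorm Bᴴ * ‖v‖ := norm_toEuclideanLin_apply_le _ _
      _ = opNorm B := by rw [opNorm_conjTranspose, hv1, mul_one]
  -- Step 4 : eigenvalues
  set N : Matrix (Fin p) (Fin p) ℂ := M * Mᴴ with hN
  have hNh : N.IsHermitian := Matrix.isHermitian_mul_conjTranspose_self M
  set lam : Fin p → ℝ := hNh.eigenvalues with hlam
  have hnonneg : ∀ i, 0 ≤ lam i := fun i =>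
    Matrix.eigenvalues_self_mul_conjTranspose_nonneg M i
  set b : OrthonormalBasis (Fin p) ℂ (EuclideanSpace ℂ (Fin p)) := hNh.eigenvectorBasis with hb
  have hcomp : ∀ x : EuclideanSpace ℂ (Fin p), Matrix.toEuclideanLin N x =
      Matrix.toEuclideanLin M (Matrix.toEuclideanLin Mᴴ x) := by
    intro x
    simp [hN, Matrix.toEuclideanLin_apply, Matrix.mulVec_mulVec]
  have heig : ∀ i, Matrix.toEuclideanLin N (b i) = (lam i) • (b i) := by
    intro i
    have h := hNh.mulVec_eigenvectorBasis i
    ext j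
    exact congrFun h j
  have hble : ∀ (x : EuclideanSpace ℂ (Fin p)), ‖Matrix.toEuclideanLin N x‖ ≤ ‖x‖ := by
    intro x
    rw [hcomp x]
    calc ‖Matrix.toEuclideanLin M (Matrix.toEuclideanLin Mᴴ x)‖
        ≤ opNorm M * ‖Matrix.toEuclideanLin Mᴴ x‖ := norm_toEuclideanLin_apply_le _ _
      _ ≤ opNorm M * (opNorm Mᴴ * ‖x‖) := by
          apply mul_le_mul_of_nonneg_left (norm_toEuclideanLin_apply_le _ _) (norm_nonneg _)
      _ ≤ 1 * (1 * ‖x‖) := by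
          apply mul_le_mul hM _ _ zero_le_one
          · apply mul_le_mul _ le_rfl (norm_nonneg _) zero_le_one
            rw [opNorm_conjTranspose]; exact hM
          · exact mul_nonneg (norm_nonneg _) (norm_nonneg _)
      _ = ‖x‖ := by ring
  have hle1 : ∀ i, lam i ≤ 1 := by
    intro i
    have h1 : ‖b i‖ = 1 := b.orthonormal.1 i
    have h2 := hble (b i)
    rw [heig i, norm_smul, h1, mul_one] at h2
    calc lam i ≤ |lam i| := le_abs_self _
      _ = ‖lam i‖ := rfl
      _ ≤ 1 := h2
  -- Rayleigh quotient
  have hsym : (Matrix.toEuclideanLin N).IsSymmetric :=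
    Matrix.isHermitian_iff_isSymmetric.mp hNh
  set c : Fin p → ℂ := fun i => b.repr w i with hcdef
  have hreprT : ∀ i, b.repr (Matrix.toEuclideanLin N w) i = (lam i : ℂ) * c i := by
    intro i
    rw [b.repr_apply_apply, ← hsym (b i) w, heig i,
      RCLike.real_smul_eq_coe_smul (K := ℂ), inner_smul_left,
      ← b.repr_apply_apply]
    simp [RCLike.conj_ofReal, hcdef]
  have hinner1 : (inner ℂ w (Matrix.toEuclideanLin N w) : ℂ) =
      ((∑ i, lam i * ‖c i‖ ^ 2 : ℝ) : ℂ) := by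
    rw [← b.repr.inner_map_map w (Matrix.toEuclideanLin N w)]
    rw [PiLp.inner_apply]
    rw [Complex.ofReal_sum]
    apply Finset.sum_congr rfl
    intro i _
    rw [hreprT i, RCLike.inner_apply]
    have hstep : (starRingEnd ℂ) (c i) * ((lam i : ℂ) * c i) =
        ((lam i * ‖c i‖ ^ 2 : ℝ) : ℂ) := by
      rw [show (starRingEnd ℂ) (c i) * ((lam i : ℂ) * c i) =
        ((lam i : ℝ) : ℂ) * (c i * (starRingEnd ℂ) (c i)) from by push_cast; ring,
        Complex.mul_conj, Complex.normSq_eq_norm_sq]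
      push_cast
      ring
    rw [mul_comm]; exact hstep
  have hinner2 : (inner ℂ w (Matrix.toEuclideanLin N w) : ℂ) =
      ((‖Matrix.toEuclideanLin Mᴴ w‖ ^ 2 : ℝ) : ℂ) := by
    rw [hcomp w]
    have hadj := LinearMap.adjoint_inner_left (Matrix.toEuclideanLin M)
      (Matrix.toEuclideanLin Mᴴ w) w
    rw [← Matrix.toEuclideanLin_conjTranspose_eq_adjoint] at hadj
    rw [← hadj, inner_self_eq_norm_sq_to_K]
    first
    | rfl
    | norm_cast
    | (push_cast; try ring)
  have hray : ∑ i, lam i * ‖c i‖ ^ 2 = ‖Matrix.toEuclideanLin Mᴴ w‖ ^ 2 :=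
    Complex.ofReal_inj.mp (hinner1.symm.trans hinner2)
  have hsumc : ∑ i, ‖c i‖ ^ 2 = 1 := by
    have h1 : ‖b.repr w‖ = 1 := by rw [b.repr.norm_map, hw1]
    rw [EuclideanSpace.norm_eq] at h1
    have := Real.sqrt_eq_one.mp h1
    simpa [hcdef] using this
  have hexists : ∃ i, lam i ≤ (opNorm B) ^ 2 := by
    have hp : 0 < p := by omega
    haveI : Nonempty (Fin p) := Fin.pos_iff_nonempty.mp hp
    obtain ⟨i0, _, hmin⟩ := Finset.exists_min_image Finset.univ lam Finset.univ_nonempty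
    refine ⟨i0, ?_⟩
    have h1 : lam i0 = ∑ i, lam i0 * ‖c i‖ ^ 2 := by
      rw [← Finset.mul_sum, hsumc, mul_one]
    have h2 : ∑ i, lam i0 * ‖c i‖ ^ 2 ≤ ∑ i, lam i * ‖c i‖ ^ 2 := by
      apply Finset.sum_le_sum
      intro i _
      exact mul_le_mul_of_nonneg_right (hmin i (Finset.mem_univ i)) (by positivity)
    have h3 : ‖Matrix.toEuclideanLin Mᴴ w‖ ^ 2 ≤ (opNorm B) ^ 2 := by
      exact pow_le_pow_left₀ (norm_nonneg _) hgw 2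
    rw [h1]
    exact le_trans h2 (by rw [hray]; exact h3)
  have hdet : ‖M.det‖ ^ 2 = ∏ i, lam i := by
    have h1 : N.det = M.det * star M.det := by
      rw [hN, Matrix.det_mul, Matrix.det_conjTranspose]
    have h2 : N.det = ((∏ i, lam i : ℝ) : ℂ) := by
      rw [hNh.det_eq_prod_eigenvalues]
      push_cast
      rfl
    have h3 : M.det * star M.det = ((‖M.det‖ ^ 2 : ℝ) : ℂ) := by
      have hst : star M.det = (starRingEnd ℂ) M.det := rfl
      rw [hst, Complex.mul_conj, Complex.normSq_eq_norm_sq]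
    apply Complex.ofReal_inj.mp
    rw [← h3, h1.symm.trans h2]
  -- Conclude
  obtain ⟨i0, hi0⟩ := hexists
  have hprod : ∏ i, lam i ≤ lam i0 := by
    rw [← Finset.mul_prod_erase Finset.univ lam (Finset.mem_univ i0)]
    calc lam i0 * ∏ i ∈ Finset.univ.erase i0, lam i
        ≤ lam i0 * 1 := by
          apply mul_le_mul_of_nonneg_left _ (hnonneg i0)
          exact Finset.prod_le_one (fun i _ => hnonneg i) (fun i _ => hle1 i)
      _ = lam i0 := mul_one _
  have hsq : ‖M.det‖ ^ 2 ≤ (opNorm B) ^ 2 := by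
    rw [hdet]; exact le_trans hprod hi0
  have h0 : (0:ℝ) ≤ opNorm B := norm_nonneg _
  nlinarith [norm_nonneg M.det]
end

section
/- Let X = {x_1,...,x_n} and Y = {y_1,...,y_n} be sets of n distinct points in Z^d, and let D̃ = min over permutations π ∈ S_n of sum_j |x_j − y_{π(j)}|_∞. For any integer ℓ ≥ D̃, the number of permutations π ∈ S_n with sum_j |x_j − y_{π(j)}|_∞ = ℓ is at most C_d^n · ((2ℓ+n)/n)^{dn}, where C_d > 0 depends only on d (one may take C_d = 2de). -/
open Finset

def sdist {d : ℕ} (x y : Fin d → ℤ) : ℕ :=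
  Finset.univ.sup fun i => (x i - y i).natAbs

lemma pow_le_pow_add_aux (a b : ℕ) (h : b ≤ a) : ∀ k, a ^ k ≤ b ^ k + k * (a - b) * a ^ (k-1) := by
  intro k
  induction k with
  | zero => simp
  | succ k ih =>
    have h1 : a ^ (k+1) = a * a ^ k := by ring
    have h2 : a * (k * (a - b) * a ^ (k-1)) ≤ k * (a - b) * a ^ k := by
      cases k with
      | zero => simp
      | succ m =>
        have : a * (a ^ m) = a ^ (m+1) := by ring
        simp only [Nat.add_sub_cancel]
        calc a * ((m+1) * (a - b) * a ^ m) = (m+1) * (a-b) * (a * a ^ m) := by ring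
        _ = (m+1) * (a-b) * a ^ (m+1) := by rw [this]
        _ ≤ (m+1) * (a-b) * a ^ (m+1) := le_rfl
    have h3 : a * b ^ k ≤ b ^ (k+1) + (a - b) * a ^ k := by
      have : a * b ^ k = b * b ^ k + (a - b) * b ^ k := by
        rcases Nat.exists_eq_add_of_le h with ⟨c, rfl⟩
        simp [Nat.add_sub_cancel_left]; ring
      rw [this]
      have : (a-b) * b ^ k ≤ (a-b) * a ^ k :=
        Nat.mul_le_mul_left _ (Nat.pow_le_pow_left h k)
      have hb : b * b ^ k = b ^ (k+1) := by ring
      omega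
    calc a ^ (k+1) = a * a ^ k := h1
    _ ≤ a * (b ^ k + k * (a - b) * a ^ (k-1)) := Nat.mul_le_mul_left _ ih
    _ = a * b ^ k + a * (k * (a - b) * a ^ (k-1)) := by ring
    _ ≤ (b ^ (k+1) + (a - b) * a ^ k) + k * (a - b) * a ^ k := Nat.add_le_add h3 h2
    _ = b ^ (k+1) + (k+1) * (a - b) * a ^ ((k+1)-1) := by simp [Nat.add_sub_cancel]; ring

noncomputable def ball {d : ℕ} (c : Fin d → ℤ) (r : ℕ) : Finset (Fin d → ℤ) :=
  Fintype.piFinset fun i => Finset.Icc (c i - r) (c i + r)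

lemma card_ball {d : ℕ} (c : Fin d → ℤ) (r : ℕ) : (ball c r).card = (2*r+1)^d := by
  rw [ball, Fintype.card_piFinset]
  have : ∀ i, (Finset.Icc (c i - r) (c i + r)).card = 2*r+1 := by
    intro i; rw [Int.card_Icc]; omega
  simp [this]

lemma mem_ball_iff {d : ℕ} (c z : Fin d → ℤ) (r : ℕ) : z ∈ ball c r ↔ sdist c z ≤ r := by
  rw [ball, Fintype.mem_piFinset, sdist]
  constructor
  · intro h
    apply Finset.sup_le
    intro i _
    have := h i
    rw [Finset.mem_Icc] at this
    omega
  · intro h i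
    have := Finset.le_sup (f := fun i => (c i - z i).natAbs) (Finset.mem_univ i)
    have h2 : (c i - z i).natAbs ≤ r := le_trans this h
    rw [Finset.mem_Icc]
    omega

noncomputable def shell {d : ℕ} (c : Fin d → ℤ) (r : ℕ) : Finset (Fin d → ℤ) :=
  (ball c r).filter fun z => sdist c z = r

lemma mem_shell {d : ℕ} {c z : Fin d → ℤ} {r : ℕ} (h : sdist c z = r) : z ∈ shell c r := by
  rw [shell, Finset.mem_filter, mem_ball_iff]
  exact ⟨le_of_eq h, h⟩

lemma card_shell {d : ℕ} (hd : 1 ≤ d) (c : Fin d → ℤ) (r : ℕ) :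
    (shell c r).card ≤ 2 * d * (2*r+1)^(d-1) := by
  cases r with
  | zero =>
    have h1 : (shell c 0).card ≤ (ball c 0).card := Finset.card_le_card (Finset.filter_subset _ _)
    rw [card_ball] at h1
    simp only [Nat.mul_zero, Nat.zero_add, one_pow] at h1 ⊢
    omega
  | succ s =>
    have hdisj : Disjoint (shell c (s+1)) (ball c s) := by
      rw [Finset.disjoint_left]
      intro z hz hz'
      rw [shell, Finset.mem_filter] at hz
      rw [mem_ball_iff] at hz'
      omega
    have hsub : shell c (s+1) ∪ ball c s ⊆ ball c (s+1) := by
      apply Finset.union_subset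
      · exact Finset.filter_subset _ _
      · intro z hz; rw [mem_ball_iff] at hz ⊢; omega
    have := Finset.card_le_card hsub
    rw [Finset.card_union_of_disjoint hdisj, card_ball, card_ball] at this
    have key := pow_le_pow_add_aux (2*(s+1)+1) (2*s+1) (by omega) d
    have h2 : 2*(s+1)+1 - (2*s+1) = 2 := by omega
    rw [h2] at key
    have h3 : d * 2 * (2*(s+1)+1)^(d-1) = 2*d*(2*(s+1)+1)^(d-1) := by ring
    omega



lemma card_adt_le (n ℓ : ℕ) :
    (Finset.Nat.antidiagonalTuple n ℓ).card ≤ (ℓ + n).choose n := by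
  classical
  have h1 : (Finset.Nat.antidiagonalTuple n ℓ).card ≤ Fintype.card (Sym (Fin n) ℓ) := by
    apply Finset.card_le_card_of_injOn
      (f := fun r : Fin n → ℕ => (Finset.univ.val.bind fun j => Multiset.replicate (r j) j))
      (t := Finset.univ.image fun s : Sym (Fin n) ℓ => (s : Multiset (Fin n))) ?_ ?_ |>.trans ?_
    · intro r hr
      rw [Finset.mem_coe, Finset.Nat.mem_antidiagonalTuple] at hr
      have hcard : Multiset.card (Finset.univ.val.bind fun j => Multiset.replicate (r j) j) = ℓ := by
        rw [Multiset.card_bind]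
        simp only [Function.comp, Multiset.card_replicate]
        exact hr
      refine Finset.mem_coe.2 (Finset.mem_image.2 ⟨⟨_, hcard⟩, Finset.mem_univ _, rfl⟩)
    · intro r _ r' _ hrr
      funext j
      have key : ∀ s : Fin n → ℕ,
          Multiset.count j (Finset.univ.val.bind fun i => Multiset.replicate (s i) i) = s j := by
        intro s
        rw [Multiset.count_bind]
        have : (Finset.univ.val.map fun i => Multiset.count j (Multiset.replicate (s i) i)).sum
            = ∑ i, if j = i then s i else 0 := by
          rw [Finset.sum]
          congr 1
          apply Multiset.map_congr rfl
          intro i _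
          rw [Multiset.count_replicate]
          by_cases h : i = j
          · simp [h]
          · rw [if_neg h, if_neg (fun hh : j = i => h hh.symm)]
        rw [this, Finset.sum_ite_eq, if_pos (Finset.mem_univ j)]
      have h1 := key r
      have h2 := key r'
      simp only at hrr
      rw [hrr, h2] at h1
      exact h1.symm
    · rw [Finset.card_image_of_injective _ (fun a b h => Sym.coe_injective h)]
      simp
  calc (Finset.Nat.antidiagonalTuple n ℓ).card ≤ Fintype.card (Sym (Fin n) ℓ) := h1
  _ = (n + ℓ - 1).choose ℓ := by rw [Sym.card_sym_eq_choose, Fintype.card_fin]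
  _ ≤ (ℓ + n).choose ℓ := Nat.choose_le_choose ℓ (by omega)
  _ = (ℓ + n).choose n := Nat.choose_symm_add


lemma pow_le_exp_mul_factorial (n : ℕ) : (n:ℝ)^n ≤ Real.exp 1 ^ n * n.factorial := by
  have h1 : (n:ℝ)^n / n.factorial ≤ Real.exp n := by
    calc (n:ℝ)^n / n.factorial
        ≤ ∑ i ∈ Finset.range (n+1), (n:ℝ)^i / i.factorial := by
          exact Finset.single_le_sum (f := fun i => (n:ℝ)^i / (i.factorial:ℝ))
            (fun i _ => by positivity) (Finset.self_mem_range_succ n)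
    _ ≤ Real.exp n := Real.sum_le_exp_of_nonneg (by positivity) _
  have h2 : Real.exp (n:ℝ) = Real.exp 1 ^ n := by
    rw [← Real.exp_nat_mul]; norm_num
  have hf : (0:ℝ) < n.factorial := by positivity
  rw [div_le_iff₀ hf] at h1
  rw [h2] at h1
  exact h1


theorem permutation_count {d : ℕ} (hd : 1 ≤ d) :
    ∃ C : ℝ, 0 < C ∧ ∀ (n : ℕ), 0 < n → ∀ (x y : Fin n → Fin d → ℤ),
      Function.Injective x → Function.Injective y → ∀ ℓ : ℕ,
      (Finset.univ.inf' Finset.univ_nonempty fun π : Equiv.Perm (Fin n) =>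
        ∑ j, sdist (x j) (y (π j))) ≤ ℓ →
      (((Finset.univ.filter fun π : Equiv.Perm (Fin n) =>
          (∑ j, sdist (x j) (y (π j))) = ℓ).card : ℝ)) ≤
        C ^ n * ((2 * (ℓ : ℝ) + n) / n) ^ (d * n) := by
  classical
  refine ⟨2 * d * Real.exp 1, by positivity, ?_⟩
  intro n hn x y hx hy ℓ _
  set M : ℝ := (2 * (ℓ:ℝ) + n) / n with hM
  have hnR : (0:ℝ) < n := by exact_mod_cast hn
  have hM0 : 0 ≤ M := by positivity
  -- target finset
  set B : Finset (Fin n → (Fin d → ℤ)) :=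
    (Finset.Nat.antidiagonalTuple n ℓ).biUnion
      (fun r => Fintype.piFinset (fun j => shell (x j) (r j))) with hB
  -- Step A : injection
  have stepA : (Finset.univ.filter fun π : Equiv.Perm (Fin n) =>
      (∑ j, sdist (x j) (y (π j))) = ℓ).card ≤ B.card := by
    apply Finset.card_le_card_of_injOn (fun π => fun j => y (π j))
    · intro π hπ
      rw [Finset.mem_coe, Finset.mem_filter] at hπ
      rw [Finset.mem_coe, hB, Finset.mem_biUnion]
      refine ⟨fun j => sdist (x j) (y (π j)), ?_, ?_⟩
      · rw [Finset.Nat.mem_antidiagonalTuple]; exact hπ.2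
      · exact Fintype.mem_piFinset.2 fun j => mem_shell rfl
    · intro π _ π' _ h
      apply Equiv.ext
      intro j
      exact hy (congrFun h j)
  -- Step B : cardinal of B
  have stepB : B.card ≤ ∑ r ∈ Finset.Nat.antidiagonalTuple n ℓ,
      ∏ j, 2 * d * (2 * r j + 1)^(d-1) := by
    refine (Finset.card_biUnion_le).trans (Finset.sum_le_sum ?_)
    intro r _
    rw [Fintype.card_piFinset]
    exact Finset.prod_le_prod' fun j _ => card_shell hd (x j) (r j)
  -- Step C : each term in ℝ
  have stepC : ∀ r ∈ Finset.Nat.antidiagonalTuple n ℓ,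
      ((∏ j, 2 * d * (2 * r j + 1)^(d-1) : ℕ) : ℝ)
        ≤ (2*(d:ℝ))^n * M ^ (n * (d-1)) := by
    intro r hr
    rw [Finset.Nat.mem_antidiagonalTuple] at hr
    push_cast
    have hprod : (∏ j, (2 * (r j : ℝ) + 1)) ≤ M ^ n := by
      set z : Fin n → ℝ := fun j => 2 * (r j : ℝ) + 1 with hz
      have hz0 : ∀ j, (0:ℝ) ≤ z j := fun j => by positivity
      have hgm : ∏ j, z j ^ ((n:ℝ)⁻¹) ≤ ∑ j, (n:ℝ)⁻¹ * z j := by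
        apply Real.geom_mean_le_arith_mean_weighted
        · intro i _; positivity
        · rw [Finset.sum_const, Finset.card_univ, Fintype.card_fin, nsmul_eq_mul]
          field_simp
        · intro i _; exact hz0 i
      have hsum : ∑ j, (n:ℝ)⁻¹ * z j = M := by
        rw [← Finset.mul_sum, hz]
        have : ∑ j, (2 * (r j : ℝ) + 1) = 2 * (ℓ:ℝ) + n := by
          rw [Finset.sum_add_distrib, ← Finset.mul_sum, Finset.sum_const, Finset.card_univ,
            Fintype.card_fin, nsmul_eq_mul, mul_one]
          congr 1
          rw [← hr]
          push_cast
          ring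
        rw [this, hM]
        ring
      rw [hsum] at hgm
      have hrec : ∏ j, z j = (∏ j, z j ^ ((n:ℝ)⁻¹)) ^ n := by
        rw [← Finset.prod_pow]
        apply Finset.prod_congr rfl
        intro j _
        rw [Real.rpow_inv_natCast_pow (hz0 j) hn.ne']
      rw [hrec]
      exact pow_le_pow_left₀ (Finset.prod_nonneg fun j _ => Real.rpow_nonneg (hz0 j) _) hgm n
    calc ∏ j, 2 * (d:ℝ) * (2 * (r j:ℝ) + 1)^(d-1)
        = (2*(d:ℝ))^n * ∏ j, (2 * (r j:ℝ) + 1)^(d-1) := by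
          rw [Finset.prod_mul_distrib, Finset.prod_const, Finset.card_univ, Fintype.card_fin]
    _ = (2*(d:ℝ))^n * (∏ j, (2 * (r j:ℝ) + 1))^(d-1) := by
          rw [Finset.prod_pow]
    _ ≤ (2*(d:ℝ))^n * (M ^ n)^(d-1) := by
          apply mul_le_mul_of_nonneg_left _ (by positivity)
          exact pow_le_pow_left₀ (Finset.prod_nonneg fun j _ => by positivity) hprod (d-1)
    _ = (2*(d:ℝ))^n * M ^ (n * (d-1)) := by rw [← pow_mul]
  -- assemble
  have hA2 : ((Finset.univ.filter fun π : Equiv.Perm (Fin n) =>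
      (∑ j, sdist (x j) (y (π j))) = ℓ).card : ℝ)
      ≤ ∑ r ∈ Finset.Nat.antidiagonalTuple n ℓ,
          ((∏ j, 2 * d * (2 * r j + 1)^(d-1) : ℕ) : ℝ) := by
    rw [← Nat.cast_sum]
    exact_mod_cast stepA.trans stepB
  have h3 : ∑ r ∈ Finset.Nat.antidiagonalTuple n ℓ,
      ((∏ j, 2 * d * (2 * r j + 1)^(d-1) : ℕ) : ℝ)
      ≤ ((Finset.Nat.antidiagonalTuple n ℓ).card : ℝ) * ((2*(d:ℝ))^n * M ^ (n * (d-1))) := by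
    have := Finset.sum_le_card_nsmul (Finset.Nat.antidiagonalTuple n ℓ)
      (fun r => ((∏ j, 2 * d * (2 * r j + 1)^(d-1) : ℕ) : ℝ))
      ((2*(d:ℝ))^n * M ^ (n * (d-1))) stepC
    rwa [nsmul_eq_mul] at this
  have hfac : (0:ℝ) < n.factorial := by positivity
  have hadt : ((Finset.Nat.antidiagonalTuple n ℓ).card : ℝ) ≤ Real.exp 1 ^ n * M ^ n := by
    have h1 : ((Finset.Nat.antidiagonalTuple n ℓ).card : ℝ) ≤ ((ℓ+n).choose n : ℝ) :=
      Nat.cast_le.2 (card_adt_le n ℓ)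
    have h2 : ((ℓ+n).choose n : ℝ) * n.factorial ≤ ((ℓ:ℝ)+n)^n := by
      have hh := Nat.descFactorial_le_pow (ℓ+n) n
      rw [Nat.descFactorial_eq_factorial_mul_choose] at hh
      calc ((ℓ+n).choose n : ℝ) * n.factorial = ((n.factorial * (ℓ+n).choose n : ℕ) : ℝ) := by
            push_cast; ring
      _ ≤ (((ℓ+n)^n : ℕ) : ℝ) := Nat.cast_le.2 hh
      _ = ((ℓ:ℝ)+n)^n := by push_cast; ring
    have h5 : ((ℓ+n).choose n : ℝ) ≤ ((ℓ:ℝ)+n)^n / n.factorial := by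
      rw [le_div_iff₀ hfac]; exact h2
    have h6 : ((ℓ:ℝ)+n)^n / n.factorial ≤ (((ℓ:ℝ)+n)/n)^n * Real.exp 1 ^ n := by
      have := pow_le_exp_mul_factorial n
      rw [div_le_iff₀ hfac, div_pow]
      rw [div_mul_eq_mul_div, div_mul_eq_mul_div, le_div_iff₀ (by positivity)]
      calc ((ℓ:ℝ)+n)^n * n^n ≤ ((ℓ:ℝ)+n)^n * (Real.exp 1 ^ n * n.factorial) :=
            mul_le_mul_of_nonneg_left this (by positivity)
      _ = ((ℓ:ℝ)+n)^n * Real.exp 1 ^ n * n.factorial := by ring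
    have h7 : (((ℓ:ℝ)+n)/n)^n ≤ M ^ n := by
      rw [hM]
      gcongr
      linarith [Nat.cast_nonneg (α := ℝ) ℓ]
    calc ((Finset.Nat.antidiagonalTuple n ℓ).card : ℝ) ≤ ((ℓ:ℝ)+n)^n / n.factorial :=
          h1.trans h5
    _ ≤ (((ℓ:ℝ)+n)/n)^n * Real.exp 1 ^ n := h6
    _ ≤ M ^ n * Real.exp 1 ^ n := mul_le_mul_of_nonneg_right h7 (by positivity)
    _ = Real.exp 1 ^ n * M ^ n := by ring
  have hdn : n + n * (d - 1) = d * n := by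
    have h := Nat.sub_add_cancel hd
    calc n + n * (d-1) = (d - 1 + 1) * n := by ring
    _ = d * n := by rw [h]
  calc ((Finset.univ.filter fun π : Equiv.Perm (Fin n) =>
      (∑ j, sdist (x j) (y (π j))) = ℓ).card : ℝ)
      ≤ ((Finset.Nat.antidiagonalTuple n ℓ).card : ℝ) * ((2*(d:ℝ))^n * M ^ (n * (d-1))) :=
        hA2.trans h3
  _ ≤ (Real.exp 1 ^ n * M ^ n) * ((2*(d:ℝ))^n * M ^ (n * (d-1))) :=
        mul_le_mul_of_nonneg_right hadt (by positivity)
  _ = (2 * (d:ℝ) * Real.exp 1) ^ n * M ^ (n + n * (d-1)) := by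
        rw [pow_add, mul_pow, mul_pow]
        ring
  _ = (2 * (d:ℝ) * Real.exp 1) ^ n * M ^ (d * n) := by rw [hdn]
end

section
/- Let X = {x_1,...,x_n}, Y = {y_1,...,y_n} ⊂ Z^d and μ > 0. Then there is a constant C_{d,μ} > 0 depending only on d and μ such that sum over all permutations π ∈ S_n of exp(−μ · sum_{j=1}^n |x_j − y_{π(j)}|) ≤ C_{d,μ}^n · exp(−(μ/(2√d)) · D_s(X,Y)), where D_s(X,Y) = min_{π ∈ S_n} sum_j |x_j − y_{π(j)}|. -/
open Finset

noncomputable def ed {d : ℕ} (x y : Fin d → ℤ) : ℝ :=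
  Real.sqrt (∑ i, ((x i : ℝ) - (y i : ℝ)) ^ 2)

noncomputable def Ds {d n : ℕ} (x y : Fin n → Fin d → ℤ) : ℝ :=
  Finset.univ.inf' Finset.univ_nonempty fun π : Equiv.Perm (Fin n) =>
    ∑ j, ed (x j) (y (π j))

lemma summable_pi_prod {g : ℤ → ℝ} (hg : Summable g) (h0 : ∀ m, 0 ≤ g m) :
    ∀ d : ℕ, Summable (fun z : Fin d → ℤ => ∏ i, g (z i)) := by
  intro d
  induction d with
  | zero => exact Summable.of_finite
  | succ d ih =>
    rw [← (Fin.consEquiv (fun _ : Fin (d + 1) => ℤ)).summable_iff]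
    have : ((fun z : Fin (d + 1) → ℤ => ∏ i, g (z i)) ∘
        (Fin.consEquiv (fun _ : Fin (d + 1) => ℤ)))
        = fun p : ℤ × (Fin d → ℤ) => g p.1 * ∏ i, g (p.2 i) := by
      funext p
      simp [Fin.consEquiv, Fin.prod_univ_succ]
    rw [this]
    exact Summable.mul_of_nonneg (f := g) (g := fun z : Fin d → ℤ => ∏ i, g (z i))
      hg ih (fun m => h0 m) (fun z => Finset.prod_nonneg fun i _ => h0 _)

lemma ed_ge_l1_div {d : ℕ} (x y : Fin d → ℤ) :
    (∑ i, |((x i : ℝ) - (y i : ℝ))|) ≤ d * ed x y := by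
  have h1 : ∀ i : Fin d, |((x i : ℝ) - (y i : ℝ))| ≤ ed x y := by
    intro i
    rw [← Real.sqrt_sq_eq_abs]
    exact Real.sqrt_le_sqrt (Finset.single_le_sum
      (fun j _ => sq_nonneg ((x j : ℝ) - (y j : ℝ))) (mem_univ i))
  calc (∑ i, |((x i : ℝ) - (y i : ℝ))|) ≤ ∑ _i : Fin d, ed x y :=
        Finset.sum_le_sum fun i _ => h1 i
    _ = d * ed x y := by simp [mul_comm]

theorem perm_sum_exp_bound {d : ℕ} (hd : 1 ≤ d) (μ : ℝ) (hμ : 0 < μ) :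
    ∃ C : ℝ, 0 < C ∧ ∀ (n : ℕ) (x y : Fin n → Fin d → ℤ),
      Function.Injective x → Function.Injective y →
      ∑ π : Equiv.Perm (Fin n), Real.exp (-μ * ∑ j, ed (x j) (y (π j))) ≤
        C ^ n * Real.exp (-(μ / (2 * Real.sqrt d)) * Ds x y) := by
  have hd0 : (0 : ℝ) < d := by exact_mod_cast Nat.lt_of_lt_of_le Nat.zero_lt_one hd
  have hsd : (1 : ℝ) ≤ Real.sqrt d := by
    rw [show (1:ℝ) = Real.sqrt 1 by simp]
    exact Real.sqrt_le_sqrt (by exact_mod_cast hd)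
  set μ' : ℝ := μ / (2 * Real.sqrt d) with hμ'def
  have hμ' : 0 < μ' := div_pos hμ (by linarith)
  have hμ'lt : μ' < μ := by
    rw [hμ'def, div_lt_iff₀ (by linarith)]
    nlinarith
  set ν : ℝ := μ - μ' with hνdef
  have hν : 0 < ν := by simp [hνdef]; linarith
  -- the one-dimensional kernel
  set c : ℝ := ν / d with hcdef
  have hc : 0 < c := div_pos hν hd0
  set g : ℤ → ℝ := fun m => Real.exp (-(c * |(m : ℝ)|)) with hgdef
  have hg0 : ∀ m, 0 ≤ g m := fun m => (Real.exp_pos _).le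
  have hgs : Summable g := by
    have hnat : Summable (fun n : ℕ => Real.exp (-(c * n))) := by
      have : (fun n : ℕ => Real.exp (-(c * n))) = fun n : ℕ => (Real.exp (-c)) ^ n := by
        funext n
        rw [← Real.exp_nat_mul]
        ring_nf
      rw [this]
      exact summable_geometric_of_lt_one (Real.exp_pos _).le
        (Real.exp_lt_one_iff.mpr (by linarith))
    refine Summable.of_nat_of_neg (f := g) ?_ ?_
    · refine hnat.congr fun n => ?_
      simp [hgdef]
    · refine hnat.congr fun n => ?_
      simp [hgdef]
  have hFs : Summable (fun z : Fin d → ℤ => ∏ i, g (z i)) := summable_pi_prod hgs hg0 d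
  set C : ℝ := ∑' z : Fin d → ℤ, ∏ i, g (z i) with hCdef
  have hC : 0 < C := by
    refine Summable.tsum_pos hFs (fun z => Finset.prod_nonneg fun i _ => hg0 _) 0 ?_
    simp [hgdef]
  refine ⟨C, hC, ?_⟩
  intro n x y hx hy
  -- row sum bound: for each j, ∑ k, exp(-ν * ed (x j) (y k)) ≤ C
  have hrow : ∀ j : Fin n, (∑ k : Fin n, Real.exp (-(ν * ed (x j) (y k)))) ≤ C := by
    intro j
    set z : Fin n → (Fin d → ℤ) := fun k i => y k i - x j i with hzdef
    have hzinj : Function.Injective z := by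
      intro a b hab
      apply hy
      funext i
      have := congrFun hab i
      simp [hzdef] at this
      linarith
    have hterm : ∀ k, Real.exp (-(ν * ed (x j) (y k))) ≤ ∏ i, g (z k i) := by
      intro k
      have hl1 : (∑ i, |((x j i : ℝ) - (y k i : ℝ))|) ≤ d * ed (x j) (y k) :=
        ed_ge_l1_div (x j) (y k)
      have h1 : -(ν * ed (x j) (y k)) ≤ ∑ i, -(c * |(z k i : ℝ)|) := by
        have hzabs : ∀ i : Fin d, |((z k i : ℝ))| = |((x j i : ℝ) - (y k i : ℝ))| := by
          intro i
          rw [abs_sub_comm]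
          congr 1
          simp [hzdef]
        have heq : (∑ i, -(c * |(z k i : ℝ)|)) = -(c * ∑ i, |((x j i : ℝ) - (y k i : ℝ))|) := by
          rw [Finset.mul_sum, ← Finset.sum_neg_distrib]
          exact Finset.sum_congr rfl fun i _ => by rw [hzabs i]
        rw [heq, neg_le_neg_iff]
        calc c * ∑ i, |((x j i : ℝ) - (y k i : ℝ))| ≤ c * (d * ed (x j) (y k)) :=
              mul_le_mul_of_nonneg_left hl1 hc.le
          _ = ν * ed (x j) (y k) := by
              rw [hcdef]; field_simp
      calc Real.exp (-(ν * ed (x j) (y k))) ≤ Real.exp (∑ i, -(c * |(z k i : ℝ)|)) :=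
            Real.exp_le_exp.mpr h1
        _ = ∏ i, g (z k i) := by rw [Real.exp_sum]
    calc (∑ k : Fin n, Real.exp (-(ν * ed (x j) (y k))))
        ≤ ∑ k : Fin n, ∏ i, g (z k i) := Finset.sum_le_sum fun k _ => hterm k
      _ = ∑ w ∈ Finset.univ.image z, ∏ i, g (w i) := by
          rw [Finset.sum_image (fun a _ b _ h => hzinj h)]
      _ ≤ C := Summable.sum_le_tsum _ (fun w _ => Finset.prod_nonneg fun i _ => hg0 _) hFs
  -- each permutation's total distance is at least Ds
  have hDs : ∀ π : Equiv.Perm (Fin n), Ds x y ≤ ∑ j, ed (x j) (y (π j)) := by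
    intro π
    exact Finset.inf'_le _ (mem_univ π)
  -- main chain
  have key : ∀ π : Equiv.Perm (Fin n),
      Real.exp (-μ * ∑ j, ed (x j) (y (π j))) ≤
        Real.exp (-μ' * Ds x y) * ∏ j, Real.exp (-(ν * ed (x j) (y (π j)))) := by
    intro π
    have h1 : -μ * ∑ j, ed (x j) (y (π j)) =
        (-μ' * ∑ j, ed (x j) (y (π j))) + (-ν * ∑ j, ed (x j) (y (π j))) := by
      simp [hνdef]; ring
    rw [h1, Real.exp_add]
    have h2 : Real.exp (-μ' * ∑ j, ed (x j) (y (π j))) ≤ Real.exp (-μ' * Ds x y) := by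
      apply Real.exp_le_exp.mpr
      have := hDs π
      nlinarith
    have h3 : Real.exp (-ν * ∑ j, ed (x j) (y (π j))) =
        ∏ j, Real.exp (-(ν * ed (x j) (y (π j)))) := by
      rw [← Real.exp_sum]
      congr 1
      rw [Finset.sum_neg_distrib, ← Finset.mul_sum]
      ring
    rw [h3] at *
    exact mul_le_mul_of_nonneg_right h2 (Finset.prod_nonneg fun j _ => (Real.exp_pos _).le)
  calc ∑ π : Equiv.Perm (Fin n), Real.exp (-μ * ∑ j, ed (x j) (y (π j)))
      ≤ ∑ π : Equiv.Perm (Fin n),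
          Real.exp (-μ' * Ds x y) * ∏ j, Real.exp (-(ν * ed (x j) (y (π j)))) :=
        Finset.sum_le_sum fun π _ => key π
    _ = Real.exp (-μ' * Ds x y) *
          ∑ π : Equiv.Perm (Fin n), ∏ j, Real.exp (-(ν * ed (x j) (y (π j)))) := by
        rw [Finset.mul_sum]
    _ ≤ Real.exp (-μ' * Ds x y) *
          ∑ f : Fin n → Fin n, ∏ j, Real.exp (-(ν * ed (x j) (y (f j)))) := by
        apply mul_le_mul_of_nonneg_left _ (Real.exp_pos _).le
        calc (∑ π : Equiv.Perm (Fin n), ∏ j, Real.exp (-(ν * ed (x j) (y (π j)))))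
            = ∑ f ∈ Finset.univ.image (fun π : Equiv.Perm (Fin n) => (π : Fin n → Fin n)),
                ∏ j, Real.exp (-(ν * ed (x j) (y (f j)))) := by
              rw [Finset.sum_image]
              intro a _ b _ h
              exact Equiv.coe_fn_injective h
          _ ≤ ∑ f : Fin n → Fin n, ∏ j, Real.exp (-(ν * ed (x j) (y (f j)))) :=
              Finset.sum_le_sum_of_subset_of_nonneg (Finset.subset_univ _)
                (fun f _ _ => Finset.prod_nonneg fun j _ => (Real.exp_pos _).le)
    _ = Real.exp (-μ' * Ds x y) *
          ∏ j, ∑ k : Fin n, Real.exp (-(ν * ed (x j) (y k))) := by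
        rw [Fintype.prod_sum]
    _ ≤ Real.exp (-μ' * Ds x y) * ∏ _j : Fin n, C := by
        apply mul_le_mul_of_nonneg_left _ (Real.exp_pos _).le
        exact Finset.prod_le_prod
          (fun j _ => Finset.sum_nonneg fun k _ => (Real.exp_pos _).le)
          (fun j _ => hrow j)
    _ = C ^ n * Real.exp (-(μ / (2 * Real.sqrt d)) * Ds x y) := by
      simp [hμ'def, mul_comm]
end

section
/- Let X = {x_1,...,x_n}, Y = {y_1,...,y_n} ⊂ Z^d, and let M = (m_{jk}) be an n×n complex matrix with |m_{jk}| ≤ C e^{−μ|x_j − y_k|} for all j,k, where C, μ > 0. Then sum_{π ∈ S_n} ∏_{j=1}^n |m_{j,π(j)}| ≤ C_{μ,d}^n · exp(−(μ/(2√d)) D_s(X,Y)), where D_s(X,Y) = min_{π ∈ S_n} sum_j |x_j − y_{π(j)}|. In particular both |det M| and the permanent of |M| satisfy this bound. -/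
open Finset

lemma sumZ (ν : ℝ) (hν : 0 < ν) : Summable (fun m : ℤ => Real.exp (-ν * |(m : ℝ)|)) := by
  apply Summable.of_nat_of_neg
  · apply Summable.congr (summable_geometric_of_lt_one (Real.exp_nonneg (-ν))
      (Real.exp_lt_one_iff.mpr (by linarith)))
    intro n
    rw [← Real.exp_nat_mul]
    push_cast
    rw [abs_of_nonneg (by positivity)]
    ring_nf
  · apply Summable.congr (summable_geometric_of_lt_one (Real.exp_nonneg (-ν))
      (Real.exp_lt_one_iff.mpr (by linarith)))
    intro n
    rw [← Real.exp_nat_mul]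
    push_cast
    rw [abs_neg, abs_of_nonneg (by positivity)]
    ring_nf

lemma sumPi (ν : ℝ) (hν : 0 < ν) : ∀ d : ℕ,
    Summable (fun z : Fin d → ℤ => ∏ i, Real.exp (-ν * |((z i : ℤ) : ℝ)|)) := by
  intro d
  induction d with
  | zero => exact Summable.of_finite
  | succ d ih =>
    rw [← (Fin.consEquiv (fun _ : Fin (d+1) => ℤ)).summable_iff]
    apply Summable.congr ((sumZ ν hν).mul_of_nonneg ih (fun m => Real.exp_nonneg _)
      (fun z => Finset.prod_nonneg fun i _ => Real.exp_nonneg _))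
    intro p
    simp [Fin.prod_univ_succ, Fin.consEquiv]

lemma key_pt {d : ℕ} (μ ν : ℝ) (hν : 0 < ν) (hμ : 0 < μ)
    (hsν : ν * Real.sqrt d = μ / 2) (v w : Fin d → ℤ) :
    Real.exp (-μ * ed v w) ≤
      Real.exp (-(μ/2) * ed v w) * ∏ i, Real.exp (-ν * |((w i - v i : ℤ) : ℝ)|) := by
  rw [← Real.exp_sum, ← Real.exp_add, Real.exp_le_exp]
  have hS : ∑ i, -ν * |((w i - v i : ℤ) : ℝ)| = -ν * ∑ i, |(w i : ℝ) - (v i : ℝ)| := by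
    rw [← Finset.mul_sum]
    congr 1
    refine Finset.sum_congr rfl fun i _ => ?_
    push_cast
    ring_nf
  rw [hS]
  have hed : 0 ≤ ed v w := Real.sqrt_nonneg _
  have hkey : ∑ i, |(w i : ℝ) - (v i : ℝ)| ≤ Real.sqrt d * ed v w := by
    set S := ∑ i, |(w i : ℝ) - (v i : ℝ)| with hSdef
    have hS0 : 0 ≤ S := Finset.sum_nonneg fun i _ => abs_nonneg _
    have hsq : S ^ 2 ≤ (d : ℝ) * ∑ i, ((v i : ℝ) - (w i : ℝ)) ^ 2 := by
      have := sq_sum_le_card_mul_sum_sq (s := (Finset.univ : Finset (Fin d)))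
        (f := fun i => |(w i : ℝ) - (v i : ℝ)|)
      simp only [Finset.card_univ, Fintype.card_fin, sq_abs] at this
      calc S ^ 2 ≤ (d : ℝ) * ∑ i, ((w i : ℝ) - (v i : ℝ)) ^ 2 := this
        _ = (d : ℝ) * ∑ i, ((v i : ℝ) - (w i : ℝ)) ^ 2 := by
            congr 1; refine Finset.sum_congr rfl fun i _ => by ring
    have hed2 : ed v w ^ 2 = ∑ i, ((v i : ℝ) - (w i : ℝ)) ^ 2 :=
      Real.sq_sqrt (Finset.sum_nonneg fun i _ => sq_nonneg _)
    have hT0 : 0 ≤ Real.sqrt d * ed v w := mul_nonneg (Real.sqrt_nonneg _) hed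
    have hT2 : (Real.sqrt d * ed v w) ^ 2 = (d : ℝ) * ∑ i, ((v i : ℝ) - (w i : ℝ)) ^ 2 := by
      rw [mul_pow, Real.sq_sqrt (Nat.cast_nonneg d), hed2]
    nlinarith [hsq, hT2, hS0, hT0]
  nlinarith [mul_le_mul_of_nonneg_left hkey hν.le, hsν]

theorem determinant_sum_bound {d : ℕ} (hd : 1 ≤ d) (μ C : ℝ)
    (hμ : 0 < μ) (hC : 0 < C) :
    ∃ C' : ℝ, 0 < C' ∧ ∀ (n : ℕ) (x y : Fin n → Fin d → ℤ),
      Function.Injective x → Function.Injective y →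
      ∀ M : Matrix (Fin n) (Fin n) ℂ,
      (∀ j k, ‖M j k‖ ≤ C * Real.exp (-μ * ed (x j) (y k))) →
      (∑ π : Equiv.Perm (Fin n), ∏ j, ‖M j (π j)‖) ≤
        C' ^ n * Real.exp (-(μ / (2 * Real.sqrt d)) * Ds x y) ∧
      ‖M.det‖ ≤
        C' ^ n * Real.exp (-(μ / (2 * Real.sqrt d)) * Ds x y) := by
  have hs1 : (1 : ℝ) ≤ Real.sqrt d := Real.one_le_sqrt.mpr (by exact_mod_cast hd)
  have hs0 : (0 : ℝ) < Real.sqrt d := lt_of_lt_of_le one_pos hs1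
  set ν : ℝ := μ / (2 * Real.sqrt d) with hνdef
  have hν : 0 < ν := div_pos hμ (by positivity)
  have hsν : ν * Real.sqrt d = μ / 2 := by
    field_simp [hνdef]
    rw [hνdef, div_mul_eq_mul_div, div_mul_eq_mul_div, div_eq_iff (mul_pos two_pos hs0).ne']; ring
  have hνμ : ν ≤ μ / 2 := by
    rw [← hsν]
    nlinarith
  set G : (Fin d → ℤ) → ℝ := fun z => ∏ i, Real.exp (-ν * |((z i : ℤ) : ℝ)|) with hGdef
  have hGs : Summable G := sumPi ν hν d
  have hG0 : ∀ z, 0 ≤ G z := fun z => Finset.prod_nonneg fun i _ => Real.exp_nonneg _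
  set K : ℝ := ∑' z, G z with hKdef
  have hK1 : 1 ≤ K := by
    have h := Summable.le_tsum hGs (fun _ => (0 : ℤ)) (fun b _ => hG0 b)
    refine le_trans (le_of_eq ?_) h
    simp [hGdef]
  have hK0 : 0 < K := lt_of_lt_of_le one_pos hK1
  refine ⟨C * K, by positivity, ?_⟩
  intro n x y hx hy M hM
  -- row sums
  set g : Fin n → Fin n → ℝ := fun j k => G (fun i => y k i - x j i) with hgdef
  have hg0 : ∀ j k, 0 ≤ g j k := fun j k => hG0 _
  have hrow : ∀ j, ∑ k, g j k ≤ K := by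
    intro j
    have hinj : ∀ a ∈ (Finset.univ : Finset (Fin n)), ∀ b ∈ Finset.univ,
        (fun k => fun i => y k i - x j i) a = (fun k => fun i => y k i - x j i) b → a = b := by
      intro a _ b _ h
      apply hy
      funext i
      have := congrFun h i
      simp only at this
      omega
    calc ∑ k, g j k
        = ∑ z ∈ Finset.univ.image (fun k => fun i => y k i - x j i), G z :=
          (Finset.sum_image (f := G) hinj).symm
      _ ≤ K := Summable.sum_le_tsum _ (fun z _ => hG0 z) hGs
  -- permanent-type bound
  have hperm : ∑ π : Equiv.Perm (Fin n), ∏ j, g j (π j) ≤ K ^ n := by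
    have h1 : ∑ π : Equiv.Perm (Fin n), ∏ j, g j (π j) ≤
        ∑ f : Fin n → Fin n, ∏ j, g j (f j) := by
      have heq := Finset.sum_image (s := (Finset.univ : Finset (Equiv.Perm (Fin n))))
        (g := fun π : Equiv.Perm (Fin n) => (π : Fin n → Fin n))
        (f := fun h : Fin n → Fin n => ∏ j, g j (h j))
        (fun a _ b _ h => Equiv.coe_fn_injective h)
      rw [← heq]
      exact Finset.sum_le_sum_of_subset_of_nonneg (Finset.subset_univ _)
        (fun f _ _ => Finset.prod_nonneg fun j _ => hg0 j (f j))
    have h2 : ∑ f : Fin n → Fin n, ∏ j, g j (f j) = ∏ j, ∑ k, g j k := by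
      rw [Finset.prod_univ_sum]
      rw [← Fintype.piFinset_univ]
    calc ∑ π : Equiv.Perm (Fin n), ∏ j, g j (π j)
        ≤ ∏ j, ∑ k, g j k := h1.trans_eq h2
      _ ≤ ∏ _j : Fin n, K := Finset.prod_le_prod
          (fun j _ => Finset.sum_nonneg fun k _ => hg0 j k) (fun j _ => hrow j)
      _ = K ^ n := by simp
  -- Ds facts
  have hDs0 : 0 ≤ Ds x y :=
    Finset.le_inf' _ _ fun π _ => Finset.sum_nonneg fun j _ => Real.sqrt_nonneg _
  have hDs_le : ∀ π : Equiv.Perm (Fin n), Ds x y ≤ ∑ j, ed (x j) (y (π j)) :=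
    fun π => Finset.inf'_le _ (Finset.mem_univ π)
  -- main bound
  have hMain : (∑ π : Equiv.Perm (Fin n), ∏ j, ‖M j (π j)‖) ≤
      (C * K) ^ n * Real.exp (-ν * Ds x y) := by
    calc ∑ π : Equiv.Perm (Fin n), ∏ j, ‖M j (π j)‖
        ≤ ∑ π : Equiv.Perm (Fin n),
            C ^ n * Real.exp (-(μ/2) * ∑ j, ed (x j) (y (π j))) * ∏ j, g j (π j) := by
          refine Finset.sum_le_sum fun π _ => ?_
          have hterm : ∀ j, ‖M j (π j)‖ ≤
              C * (Real.exp (-(μ/2) * ed (x j) (y (π j))) * g j (π j)) := by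
            intro j
            refine (hM j (π j)).trans ?_
            exact mul_le_mul_of_nonneg_left (key_pt μ ν hν hμ hsν (x j) (y (π j))) hC.le
          calc ∏ j, ‖M j (π j)‖
              ≤ ∏ j, (C * (Real.exp (-(μ/2) * ed (x j) (y (π j))) * g j (π j))) :=
                Finset.prod_le_prod (fun j _ => norm_nonneg _)
                  (fun j _ => hterm j)
            _ = C ^ n * Real.exp (-(μ/2) * ∑ j, ed (x j) (y (π j))) * ∏ j, g j (π j) := by
                rw [Finset.prod_mul_distrib, Finset.prod_mul_distrib, Finset.prod_const,
                  ← Real.exp_sum, ← Finset.mul_sum]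
                simp [mul_assoc]
      _ ≤ ∑ π : Equiv.Perm (Fin n),
            C ^ n * Real.exp (-ν * Ds x y) * ∏ j, g j (π j) := by
          refine Finset.sum_le_sum fun π _ => ?_
          have hexp : Real.exp (-(μ/2) * ∑ j, ed (x j) (y (π j))) ≤
              Real.exp (-ν * Ds x y) := by
            rw [Real.exp_le_exp]
            have h1 := hDs_le π
            nlinarith [hDs0]
          have hp0 : 0 ≤ ∏ j, g j (π j) := Finset.prod_nonneg fun j _ => hg0 j (π j)
          have hCn : (0:ℝ) ≤ C ^ n := by positivity
          exact mul_le_mul_of_nonneg_right (mul_le_mul_of_nonneg_left hexp hCn) hp0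
      _ = C ^ n * Real.exp (-ν * Ds x y) * ∑ π : Equiv.Perm (Fin n), ∏ j, g j (π j) := by
          rw [← Finset.mul_sum]
      _ ≤ C ^ n * Real.exp (-ν * Ds x y) * K ^ n := by
          refine mul_le_mul_of_nonneg_left hperm (by positivity)
      _ = (C * K) ^ n * Real.exp (-ν * Ds x y) := by rw [mul_pow]; ring
  refine ⟨hMain, ?_⟩
  -- det bound
  have hdet : ‖M.det‖ ≤ ∑ π : Equiv.Perm (Fin n), ∏ j, ‖M j (π j)‖ := by
    rw [Matrix.det_apply]
    refine (norm_sum_le _ _).trans (le_of_eq ?_)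
    have e1 : ∀ σ : Equiv.Perm (Fin n),
        ‖Equiv.Perm.sign σ • ∏ i, M (σ i) i‖ = ∏ i, ‖M (σ i) i‖ := by
      intro σ
      rcases Int.units_eq_one_or (Equiv.Perm.sign σ) with h | h <;>
        simp [h, Units.smul_def, norm_prod]
    have e2 : ∀ σ : Equiv.Perm (Fin n),
        ∏ i, ‖M (σ i) i‖ = ∏ i, ‖M i (σ⁻¹ i)‖ := by
      intro σ
      have := Equiv.prod_comp σ (fun i => ‖M i (σ⁻¹ i)‖)
      simpa using this
    calc ∑ σ : Equiv.Perm (Fin n), ‖Equiv.Perm.sign σ • ∏ i, M (σ i) i‖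
        = ∑ σ : Equiv.Perm (Fin n), ∏ i, ‖M i (σ⁻¹ i)‖ := by
          refine Finset.sum_congr rfl fun σ _ => ?_
          rw [e1 σ, e2 σ]
      _ = ∑ σ : Equiv.Perm (Fin n), ∏ i, ‖M i (σ i)‖ := by
          have := Equiv.sum_comp (Equiv.inv (Equiv.Perm (Fin n)))
            (fun σ : Equiv.Perm (Fin n) => ∏ i, ‖M i (σ i)‖)
          simpa [Equiv.inv_apply] using this
  exact hdet.trans hMain
end

section
/- Suppose H is a self-adjoint operator on ℓ^2(Z^d) with a complete orthonormal set of eigenfunctions {φ_k} satisfying uniform localization: there exist C, μ > 0 and centers m_k ∈ Z^d with |φ_k(m)| ≤ C e^{−μ|m − m_k|} for all k and m. Then for every 0 < μ' < μ there is a constant C' > 0 such that for all x, y ∈ Z^d and all t ∈ R, |⟨δ_x, e^{−itH} δ_y⟩| ≤ C' e^{−μ'|x−y|}. -/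
open Finset

noncomputable def edF {d : ℕ} (x : Fin d → ℤ) : EuclideanSpace ℝ (Fin d) :=
  (WithLp.equiv 2 (Fin d → ℝ)).symm (fun i => (x i : ℝ))

lemma edF_apply {d : ℕ} (x : Fin d → ℤ) (i : Fin d) : edF x i = (x i : ℝ) := rfl

lemma ed_eq_dist {d : ℕ} (x y : Fin d → ℤ) : ed x y = dist (edF x) (edF y) := by
  rw [EuclideanSpace.dist_eq, ed]
  congr 1
  refine Finset.sum_congr rfl fun i _ => ?_
  rw [Real.dist_eq, sq_abs, edF_apply, edF_apply]

lemma ed_nonneg {d : ℕ} (x y : Fin d → ℤ) : 0 ≤ ed x y := Real.sqrt_nonneg _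

lemma ed_symm {d : ℕ} (x y : Fin d → ℤ) : ed x y = ed y x := by
  rw [ed_eq_dist, ed_eq_dist, dist_comm]

lemma ed_triangle {d : ℕ} (x y z : Fin d → ℤ) : ed x z ≤ ed x y + ed y z := by
  rw [ed_eq_dist, ed_eq_dist, ed_eq_dist]; exact dist_triangle _ _ _

lemma ed_sub {d : ℕ} (p q : Fin d → ℤ) : ed p q = ed (p - q) 0 := by
  unfold ed
  congr 1
  refine Finset.sum_congr rfl fun i _ => ?_
  simp [Pi.sub_apply]

lemma summable_exp_int {c : ℝ} (hc : 0 < c) :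
    Summable fun n : ℤ => Real.exp (-c * |(n : ℝ)|) := by
  have hg : Summable fun n : ℕ => Real.exp (-c) ^ n :=
    summable_geometric_of_lt_one (Real.exp_pos _).le
      (Real.exp_lt_one_iff.mpr (by linarith))
  have key : ∀ n : ℕ, Real.exp (-c * |((n : ℤ) : ℝ)|) = Real.exp (-c) ^ n := by
    intro n
    rw [← Real.exp_nat_mul]
    congr 1
    rw [Int.cast_natCast, abs_of_nonneg (by positivity : (0:ℝ) ≤ (n:ℝ))]
    ring
  have key' : ∀ n : ℕ, Real.exp (-c * |((-(n : ℤ) : ℤ) : ℝ)|) = Real.exp (-c) ^ n := by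
    intro n
    rw [← key n]
    congr 2
    push_cast
    rw [abs_neg]
  exact Summable.of_nat_of_neg (hg.congr fun n => (key n).symm)
    (hg.congr fun n => (key' n).symm)

lemma summable_prod_exp (n : ℕ) {c : ℝ} (hc : 0 < c) :
    Summable fun p : Fin n → ℤ => ∏ i, Real.exp (-c * |(p i : ℝ)|) := by
  induction n with
  | zero => exact Summable.of_finite
  | succ n ih =>
      have h3 : Summable fun z : ℤ × (Fin n → ℤ) =>
          Real.exp (-c * |(z.1 : ℝ)|) * ∏ i, Real.exp (-c * |(z.2 i : ℝ)|) :=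
        Summable.mul_of_nonneg (f := fun k : ℤ => Real.exp (-c * |(k : ℝ)|))
          (g := fun p : Fin n → ℤ => ∏ i, Real.exp (-c * |(p i : ℝ)|))
          (summable_exp_int hc) ih (fun _ => (Real.exp_pos _).le)
          (fun p => Finset.prod_nonneg fun i _ => (Real.exp_pos _).le)
      rw [← (Fin.consEquiv (fun _ : Fin (n+1) => ℤ)).summable_iff]
      refine h3.congr fun z => ?_
      show _ = ∏ i : Fin (n+1), Real.exp (-c * |((Fin.cons z.1 z.2 : Fin (n+1) → ℤ) i : ℝ)|)
      rw [Fin.prod_univ_succ]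
      simp [Fin.cons_zero, Fin.cons_succ]

lemma ed_zero_eq {d : ℕ} (p : Fin d → ℤ) :
    ed p 0 = Real.sqrt (∑ i, ((p i : ℝ)) ^ 2) := by
  unfold ed
  congr 1
  refine Finset.sum_congr rfl fun i _ => ?_
  norm_num

lemma sum_abs_le_sqrt {d : ℕ} (f : Fin d → ℝ) :
    ∑ i, |f i| ≤ Real.sqrt d * Real.sqrt (∑ i, f i ^ 2) := by
  have h := sq_sum_le_card_mul_sum_sq (s := (univ : Finset (Fin d))) (f := fun i => |f i|)
  simp only [Finset.card_univ, Fintype.card_fin, sq_abs] at h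
  have h1 : ∑ i, |f i| = Real.sqrt ((∑ i, |f i|) ^ 2) :=
    (Real.sqrt_sq (Finset.sum_nonneg fun i _ => abs_nonneg _)).symm
  rw [h1, ← Real.sqrt_mul (by positivity)]
  exact Real.sqrt_le_sqrt h

lemma summable_exp_ed {d : ℕ} (hd : 1 ≤ d) {c : ℝ} (hc : 0 < c) :
    Summable fun p : Fin d → ℤ => Real.exp (-c * ed p 0) := by
  have hd0 : (0:ℝ) < Real.sqrt d := Real.sqrt_pos.mpr (by exact_mod_cast hd)
  have hc' : 0 < c / Real.sqrt d := div_pos hc hd0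
  refine ((summable_prod_exp d hc').of_nonneg_of_le (fun p => (Real.exp_pos _).le)) fun p => ?_
  rw [← Real.exp_sum]
  apply Real.exp_le_exp.mpr
  have habs : ∑ i, |(p i : ℝ)| ≤ Real.sqrt d * ed p 0 := by
    rw [ed_zero_eq]; exact sum_abs_le_sqrt _
  have : ∑ i, -(c / Real.sqrt d) * |(p i : ℝ)| = -(c / Real.sqrt d) * ∑ i, |(p i : ℝ)| := by
    rw [Finset.mul_sum]
  rw [this]
  have h2 : (c / Real.sqrt d) * (∑ i, |(p i : ℝ)|) ≤ (c / Real.sqrt d) * (Real.sqrt d * ed p 0) :=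
    mul_le_mul_of_nonneg_left habs hc'.le
  have h3 : (c / Real.sqrt d) * (Real.sqrt d * ed p 0) = c * ed p 0 := by
    field_simp
  nlinarith [h2, h3]

lemma summable_exp_ed_left {d : ℕ} (hd : 1 ≤ d) {c : ℝ} (hc : 0 < c) (x : Fin d → ℤ) :
    Summable fun p : Fin d → ℤ => Real.exp (-c * ed x p) := by
  have h : (fun p : Fin d → ℤ => Real.exp (-c * ed x p))
      = (fun q : Fin d → ℤ => Real.exp (-c * ed q 0)) ∘ (Equiv.subRight x) := by
    funext p
    simp only [Function.comp_apply, Equiv.subRight_apply]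
    rw [ed_symm, ed_sub]
  rw [h, (Equiv.subRight x).summable_iff]
  exact summable_exp_ed hd hc

lemma tsum_exp_ed_left {d : ℕ} (hd : 1 ≤ d) {c : ℝ} (hc : 0 < c) (x : Fin d → ℤ) :
    ∑' p : Fin d → ℤ, Real.exp (-c * ed x p) = ∑' q : Fin d → ℤ, Real.exp (-c * ed q 0) := by
  rw [← (Equiv.subRight x).tsum_eq (fun q : Fin d → ℤ => Real.exp (-c * ed q 0))]
  congr 1
  funext p
  simp only [Equiv.subRight_apply]
  rw [ed_symm, ed_sub]

lemma summable_exp_ed_shift {d : ℕ} (hd : 1 ≤ d) {c : ℝ} (hc : 0 < c) (v : Fin d → ℤ) :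
    Summable fun p : Fin d → ℤ => Real.exp (-c * ed (p - v) 0) :=
  ((Equiv.subRight v).summable_iff
    (f := fun q : Fin d → ℤ => Real.exp (-c * ed q 0))).mpr (summable_exp_ed hd hc)

/-- For a system with uniformly localized complete orthonormal eigenfunctions
`φ k` (eigenvalues `E k`, localization centers `m k`), the matrix elements of
the unitary group `⟨δ_x, e^{-itH} δ_y⟩ = ∑_k e^{-itE_k} φ_k(x) conj(φ_k(y))`
decay exponentially in `|x - y|`, uniformly in `t`. -/
theorem ule_implies_dynamical_localization {d : ℕ} (hd : 1 ≤ d)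
    (φ : ℕ → (Fin d → ℤ) → ℂ) (E : ℕ → ℝ) (m : ℕ → Fin d → ℤ)
    (C μ : ℝ) (hC : 0 < C) (hμ : 0 < μ)
    (horth : ∀ k l : ℕ, ∑' p : Fin d → ℤ, φ k p * (starRingEnd ℂ) (φ l p) =
      if k = l then 1 else 0)
    (hcomplete : ∀ q : Fin d → ℤ, ∑' k : ℕ, ‖φ k q‖ ^ 2 = 1)
    (hloc : ∀ k p, ‖φ k p‖ ≤ C * Real.exp (-μ * ed p (m k)))
    (μ' : ℝ) (hμ'0 : 0 < μ') (hμ' : μ' < μ) :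
    ∃ C' : ℝ, 0 < C' ∧ ∀ (x y : Fin d → ℤ) (t : ℝ),
      ‖∑' k : ℕ, Complex.exp (-Complex.I * t * (E k : ℂ)) * φ k x *
        (starRingEnd ℂ) (φ k y)‖ ≤ C' * Real.exp (-μ' * ed x y) := by
  set ε := μ - μ' with hε
  have hε0 : 0 < ε := by rw [hε]; linarith
  have h2μ : (0:ℝ) < 2 * μ := by linarith
  -- each eigenfunction is normalized
  have hnorm : ∀ k, Summable (fun p : Fin d → ℤ => ‖φ k p‖ ^ 2) ∧
      ∑' p : Fin d → ℤ, ‖φ k p‖ ^ 2 = 1 := by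
    intro k
    have heq : ∀ p : Fin d → ℤ, ((‖φ k p‖ ^ 2 : ℝ) : ℂ)
        = φ k p * (starRingEnd ℂ) (φ k p) := by
      intro p
      rw [Complex.sq_norm, Complex.mul_conj]
    have h1 : ∑' p : Fin d → ℤ, ((‖φ k p‖ ^ 2 : ℝ) : ℂ) = 1 := by
      rw [tsum_congr heq, horth k k, if_pos rfl]
    have hsum : Summable (fun p : Fin d → ℤ => ‖φ k p‖ ^ 2) := by
      by_contra h
      have h2 : ¬ Summable (fun p : Fin d → ℤ => ((‖φ k p‖ ^ 2 : ℝ) : ℂ)) := by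
        rwa [Complex.summable_ofReal]
      rw [tsum_eq_zero_of_not_summable h2] at h1
      exact one_ne_zero h1.symm
    refine ⟨hsum, ?_⟩
    have := Complex.ofReal_tsum (L := SummationFilter.unconditional _) (fun p : Fin d → ℤ => ‖φ k p‖ ^ 2)
    rw [h1] at this
    exact_mod_cast this
  -- completeness sums are summable
  have hcsum : ∀ q : Fin d → ℤ, Summable (fun k : ℕ => ‖φ k q‖ ^ 2) := by
    intro q
    by_contra h
    have := tsum_eq_zero_of_not_summable h
    rw [hcomplete q] at this
    exact one_ne_zero this
  -- choose a cutoff finite set s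
  obtain ⟨s, hs⟩ : ∃ s : Finset (Fin d → ℤ),
      ∑' q : {q : Fin d → ℤ // q ∉ s}, C^2 * Real.exp (-(2*μ) * ed (q : Fin d → ℤ) 0)
        < 1/2 := by
    have ht := tendsto_tsum_compl_atTop_zero
      (fun q : Fin d → ℤ => C^2 * Real.exp (-(2*μ) * ed q 0))
    exact ((tendsto_order.1 ht).2 (1/2) (by norm_num)).exists
  set sk : ℕ → Finset (Fin d → ℤ) := fun k => s.map (addRightEmbedding (m k)) with hskdef
  have hsk : ∀ k p, p ∈ sk k ↔ p - m k ∈ s := by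
    intro k p
    simp only [hskdef, Finset.mem_map, addRightEmbedding_apply]
    constructor
    · rintro ⟨a, ha, rfl⟩; simpa using ha
    · intro h; exact ⟨p - m k, h, by abel⟩
  -- pointwise localization bound squared
  have hb : ∀ k p, ‖φ k p‖ ^ 2 ≤ C^2 * Real.exp (-(2*μ) * ed (p - m k) 0) := by
    intro k p
    have h1 : ‖φ k p‖ ^ 2 ≤ (C * Real.exp (-μ * ed p (m k))) ^ 2 :=
      pow_le_pow_left₀ (norm_nonneg _) (hloc k p) 2
    calc ‖φ k p‖ ^ 2 ≤ (C * Real.exp (-μ * ed p (m k))) ^ 2 := h1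
      _ = C^2 * Real.exp (-(2*μ) * ed (p - m k) 0) := by
          rw [← ed_sub, mul_pow, pow_two (Real.exp _), ← Real.exp_add]
          congr 1
          ring
  -- tail bound for each k
  have htail : ∀ k, ∑' p : {p : Fin d → ℤ // p ∉ sk k},
      ‖φ k (p : Fin d → ℤ)‖ ^ 2 < 1/2 := by
    intro k
    have hs1 : Summable (fun p : {p : Fin d → ℤ // p ∉ sk k} =>
        ‖φ k (p : Fin d → ℤ)‖ ^ 2) := ((hnorm k).1).subtype _
    have hfull : Summable (fun p : Fin d → ℤ => C^2 * Real.exp (-(2*μ) * ed (p - m k) 0)) :=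
      (summable_exp_ed_shift hd h2μ (m k)).mul_left _
    have hs2 : Summable (fun p : {p : Fin d → ℤ // p ∉ sk k} =>
        C^2 * Real.exp (-(2*μ) * ed ((p : Fin d → ℤ) - m k) 0)) := hfull.subtype _
    refine lt_of_le_of_lt (Summable.tsum_le_tsum (fun p => hb k (p : Fin d → ℤ)) hs1 hs2) ?_
    have hiff : ∀ p : Fin d → ℤ, p ∉ sk k ↔ (Equiv.subRight (m k)) p ∉ s := fun p => by
      rw [Equiv.subRight_apply, not_iff_not, hsk k p]
    have : ∑' p : {p : Fin d → ℤ // p ∉ sk k},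
        C^2 * Real.exp (-(2*μ) * ed ((p : Fin d → ℤ) - m k) 0)
        = ∑' q : {q : Fin d → ℤ // q ∉ s}, C^2 * Real.exp (-(2*μ) * ed (q : Fin d → ℤ) 0) := by
      rw [← ((Equiv.subRight (m k)).subtypeEquiv hiff).tsum_eq
        (fun q : {q : Fin d → ℤ // q ∉ s} => C^2 * Real.exp (-(2*μ) * ed (q : Fin d → ℤ) 0))]
      refine tsum_congr fun p => ?_
      obtain ⟨p, hp⟩ := p
      simp [Equiv.subtypeEquiv_apply, Equiv.subRight_apply]
    rw [this]
    exact hs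
  -- at least half the mass is inside sk k
  have hhalf : ∀ k, (1:ℝ)/2 ≤ ∑ p ∈ sk k, ‖φ k p‖ ^ 2 := by
    intro k
    have h1 := Summable.sum_add_tsum_subtype_compl (hnorm k).1 (sk k)
    rw [(hnorm k).2] at h1
    have h2 := htail k
    have h3 : ∑' p : {p : Fin d → ℤ // p ∉ sk k}, ‖φ k (p : Fin d → ℤ)‖ ^ 2
        = 1 - ∑ p ∈ sk k, ‖φ k p‖ ^ 2 := by linarith
    linarith
  set R : ℝ := ∑ q ∈ s, ed q 0 with hRdef
  have hR : ∀ k p, p ∈ sk k → ed p (m k) ≤ R := by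
    intro k p hp
    rw [ed_sub, hRdef]
    exact Finset.single_le_sum (fun q _ => ed_nonneg q 0) ((hsk k p).1 hp)
  set G : ℝ := ∑' q : Fin d → ℤ, Real.exp (-ε * ed q 0) with hGdef
  have hG0 : 0 ≤ G := tsum_nonneg fun q => (Real.exp_pos _).le
  set K : ℝ := 2 * Real.exp (ε * R) * G with hKdef
  have hK0 : 0 ≤ K := by positivity
  -- the key uniform bound on finite partial sums
  have hkey : ∀ (x : Fin d → ℤ) (F : Finset ℕ),
      ∑ k ∈ F, Real.exp (-ε * ed x (m k)) ≤ K := by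
    intro x F
    set U : Finset (Fin d → ℤ) := F.biUnion (fun k => sk k) with hUdef
    have step1 : ∀ k ∈ F, Real.exp (-ε * ed x (m k))
        ≤ 2 * ∑ p ∈ sk k, ‖φ k p‖ ^ 2 * Real.exp (-ε * ed x (m k)) := by
      intro k _
      rw [← Finset.sum_mul]
      have h := hhalf k
      have hepos := Real.exp_pos (-ε * ed x (m k))
      nlinarith
    have step2 : ∀ k ∈ F, 2 * ∑ p ∈ sk k, ‖φ k p‖ ^ 2 * Real.exp (-ε * ed x (m k))
        ≤ 2 * ∑ p ∈ U, ‖φ k p‖ ^ 2 * (Real.exp (ε * R) * Real.exp (-ε * ed x p)) := by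
      intro k hk
      have hle : ∀ p ∈ sk k, ‖φ k p‖ ^ 2 * Real.exp (-ε * ed x (m k))
          ≤ ‖φ k p‖ ^ 2 * (Real.exp (ε * R) * Real.exp (-ε * ed x p)) := by
        intro p hp
        refine mul_le_mul_of_nonneg_left ?_ (by positivity)
        rw [← Real.exp_add]
        apply Real.exp_le_exp.mpr
        have h1 : ed x p ≤ ed x (m k) + ed p (m k) := by
          have h := ed_triangle x (m k) p
          rwa [ed_symm (m k) p] at h
        have h2 : ed p (m k) ≤ R := hR k p hp
        nlinarith
      refine mul_le_mul_of_nonneg_left ?_ (by norm_num)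
      calc ∑ p ∈ sk k, ‖φ k p‖ ^ 2 * Real.exp (-ε * ed x (m k))
          ≤ ∑ p ∈ sk k, ‖φ k p‖ ^ 2 * (Real.exp (ε * R) * Real.exp (-ε * ed x p)) :=
            Finset.sum_le_sum hle
        _ ≤ ∑ p ∈ U, ‖φ k p‖ ^ 2 * (Real.exp (ε * R) * Real.exp (-ε * ed x p)) :=
            Finset.sum_le_sum_of_subset_of_nonneg
              (Finset.subset_biUnion_of_mem _ hk) (fun p _ _ => by positivity)
    have step3 : ∑ k ∈ F, Real.exp (-ε * ed x (m k))
        ≤ 2 * ∑ p ∈ U, (∑ k ∈ F, ‖φ k p‖ ^ 2)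
            * (Real.exp (ε * R) * Real.exp (-ε * ed x p)) := by
      calc ∑ k ∈ F, Real.exp (-ε * ed x (m k))
          ≤ ∑ k ∈ F, 2 * ∑ p ∈ U, ‖φ k p‖ ^ 2
              * (Real.exp (ε * R) * Real.exp (-ε * ed x p)) :=
            Finset.sum_le_sum (fun k hk => (step1 k hk).trans (step2 k hk))
        _ = 2 * ∑ p ∈ U, (∑ k ∈ F, ‖φ k p‖ ^ 2)
              * (Real.exp (ε * R) * Real.exp (-ε * ed x p)) := by
            rw [← Finset.mul_sum, Finset.sum_comm]
            congr 1
            refine Finset.sum_congr rfl fun p _ => ?_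
            rw [Finset.sum_mul]
    have step4 : ∀ p : Fin d → ℤ, ∑ k ∈ F, ‖φ k p‖ ^ 2 ≤ 1 := by
      intro p
      rw [← hcomplete p]
      exact Summable.sum_le_tsum F (fun k _ => by positivity) (hcsum p)
    have step5 : ∑ p ∈ U, Real.exp (-ε * ed x p) ≤ G := by
      rw [hGdef, ← tsum_exp_ed_left hd hε0 x]
      exact Summable.sum_le_tsum U (fun p _ => (Real.exp_pos _).le) (summable_exp_ed_left hd hε0 x)
    calc ∑ k ∈ F, Real.exp (-ε * ed x (m k))
        ≤ 2 * ∑ p ∈ U, (∑ k ∈ F, ‖φ k p‖ ^ 2)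
            * (Real.exp (ε * R) * Real.exp (-ε * ed x p)) := step3
      _ ≤ 2 * ∑ p ∈ U, 1 * (Real.exp (ε * R) * Real.exp (-ε * ed x p)) := by
          refine mul_le_mul_of_nonneg_left (Finset.sum_le_sum fun p _ => ?_) (by norm_num)
          exact mul_le_mul_of_nonneg_right (step4 p) (by positivity)
      _ = 2 * Real.exp (ε * R) * ∑ p ∈ U, Real.exp (-ε * ed x p) := by
          simp only [Finset.mul_sum]
          exact Finset.sum_congr rfl fun p _ => by ring
      _ ≤ K := by
          rw [hKdef]
          exact mul_le_mul_of_nonneg_left step5 (by positivity)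
  have hsumS : ∀ x : Fin d → ℤ, Summable (fun k : ℕ => Real.exp (-ε * ed x (m k))) :=
    fun x => summable_of_sum_le (fun k => (Real.exp_pos _).le) (hkey x)
  have htsumS : ∀ x : Fin d → ℤ, ∑' k : ℕ, Real.exp (-ε * ed x (m k)) ≤ K :=
    fun x => Summable.tsum_le_of_sum_le (hsumS x) (hkey x)
  refine ⟨C^2 * K + 1, by positivity, ?_⟩
  intro x y t
  have hterm : ∀ k : ℕ, ‖Complex.exp (-Complex.I * t * (E k : ℂ)) * φ k x *
      (starRingEnd ℂ) (φ k y)‖ = ‖φ k x‖ * ‖φ k y‖ := by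
    intro k
    rw [norm_mul, norm_mul, Complex.norm_exp]
    have hre : (-Complex.I * t * (E k : ℂ)).re = 0 := by simp
    rw [hre, Real.exp_zero, one_mul, Complex.norm_conj]
  have hbound : ∀ k : ℕ, ‖φ k x‖ * ‖φ k y‖
      ≤ (C^2 * Real.exp (-μ' * ed x y)) * Real.exp (-ε * ed x (m k)) := by
    intro k
    have h1 : ‖φ k x‖ * ‖φ k y‖
        ≤ (C * Real.exp (-μ * ed x (m k))) * (C * Real.exp (-μ * ed y (m k))) :=
      mul_le_mul (hloc k x) (hloc k y) (norm_nonneg _) (by positivity)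
    have hD : ed x y ≤ ed x (m k) + ed y (m k) := by
      have h := ed_triangle x (m k) y
      rwa [ed_symm (m k) y] at h
    have ha0 : 0 ≤ ed x (m k) := ed_nonneg _ _
    have hb0 : 0 ≤ ed y (m k) := ed_nonneg _ _
    have hexp : -μ * ed x (m k) + -μ * ed y (m k) ≤ -μ' * ed x y + -ε * ed x (m k) := by
      rw [hε]
      nlinarith
    calc ‖φ k x‖ * ‖φ k y‖
        ≤ (C * Real.exp (-μ * ed x (m k))) * (C * Real.exp (-μ * ed y (m k))) := h1
      _ = C^2 * Real.exp (-μ * ed x (m k) + -μ * ed y (m k)) := by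
          rw [Real.exp_add]; ring
      _ ≤ C^2 * Real.exp (-μ' * ed x y + -ε * ed x (m k)) := by
          exact mul_le_mul_of_nonneg_left (Real.exp_le_exp.mpr hexp) (by positivity)
      _ = (C^2 * Real.exp (-μ' * ed x y)) * Real.exp (-ε * ed x (m k)) := by
          rw [Real.exp_add]; ring
  have hsummand : Summable (fun k : ℕ => ‖Complex.exp (-Complex.I * t * (E k : ℂ)) * φ k x *
      (starRingEnd ℂ) (φ k y)‖) := by
    refine Summable.of_nonneg_of_le (fun k => norm_nonneg _) (fun k => ?_)
      ((hsumS x).mul_left (C^2 * Real.exp (-μ' * ed x y)))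
    rw [hterm k]
    exact hbound k
  calc ‖∑' k : ℕ, Complex.exp (-Complex.I * t * (E k : ℂ)) * φ k x *
        (starRingEnd ℂ) (φ k y)‖
      = ‖∑' k : ℕ, Complex.exp (-Complex.I * t * (E k : ℂ)) * φ k x *
        (starRingEnd ℂ) (φ k y)‖ := rfl
    _ ≤ ∑' k : ℕ, ‖Complex.exp (-Complex.I * t * (E k : ℂ)) * φ k x *
        (starRingEnd ℂ) (φ k y)‖ := norm_tsum_le_tsum_norm hsummand
    _ ≤ ∑' k : ℕ, (C^2 * Real.exp (-μ' * ed x y)) * Real.exp (-ε * ed x (m k)) := by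
        refine Summable.tsum_le_tsum (fun k => ?_) hsummand
          ((hsumS x).mul_left (C^2 * Real.exp (-μ' * ed x y)))
        rw [hterm k]
        exact hbound k
    _ = (C^2 * Real.exp (-μ' * ed x y)) * ∑' k : ℕ, Real.exp (-ε * ed x (m k)) := tsum_mul_left
    _ ≤ (C^2 * Real.exp (-μ' * ed x y)) * K := by
        exact mul_le_mul_of_nonneg_left (htsumS x) (by positivity)
    _ ≤ (C^2 * K + 1) * Real.exp (-μ' * ed x y) := by
        nlinarith [Real.exp_pos (-μ' * ed x y)]
end

section
/- Let (m_{jk}) be an n×n matrix of nonnegative reals satisfying m_{jk} ≤ C e^{−μ|x_j − y_k|} for distinct points x_1,...,x_n, y_1,...,y_n ∈ Z^d. Then the permanent per(M) = sum_{π∈S_n} ∏_j m_{j,π(j)} satisfies per(M) ≤ C_{μ,d}^n e^{−(μ/(2√d)) D_s(X,Y)}, where D_s(X,Y) = min_{π∈S_n} sum_j |x_j − y_{π(j)}| and C_{μ,d} depends only on μ and d. -/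
open Finset

/-- ℓ¹ ≤ √d · ℓ² -/
lemma l1_le_sqrt_mul_ed {d : ℕ} (x y : Fin d → ℤ) :
    ∑ i, |((x i : ℝ) - (y i : ℝ))| ≤ Real.sqrt d * ed x y := by
  have h := sq_sum_le_card_mul_sum_sq (s := (univ : Finset (Fin d)))
    (f := fun i => |((x i : ℝ) - (y i : ℝ))|)
  simp only [sq_abs, Finset.card_univ, Fintype.card_fin] at h
  have h0 : 0 ≤ ∑ i, |((x i : ℝ) - (y i : ℝ))| :=
    Finset.sum_nonneg fun i _ => abs_nonneg _
  have := Real.sqrt_le_sqrt h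
  rwa [Real.sqrt_sq h0, Real.sqrt_mul (by positivity)] at this

lemma summable_g {c : ℝ} (hc : 0 < c) :
    Summable (fun t : ℤ => Real.exp (-c * |(t : ℝ)|)) := by
  have hr0 : (0:ℝ) ≤ Real.exp (-c) := (Real.exp_pos _).le
  have hr1 : Real.exp (-c) < 1 := Real.exp_lt_one_iff.mpr (by linarith)
  have hgeo := summable_geometric_of_lt_one hr0 hr1
  apply Summable.of_nat_of_neg
  · refine hgeo.congr fun n => ?_
    rw [← Real.exp_nat_mul]
    push_cast
    rw [abs_of_nonneg (by positivity)]
    ring_nf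
  · refine hgeo.congr fun n => ?_
    rw [← Real.exp_nat_mul]
    push_cast
    rw [abs_neg, abs_of_nonneg (by positivity)]
    ring_nf

lemma summable_G {c : ℝ} (hc : 0 < c) (d : ℕ) :
    Summable (fun z : Fin d → ℤ => ∏ i, Real.exp (-c * |(z i : ℝ)|)) := by
  induction d with
  | zero => exact Summable.of_finite
  | succ d ih =>
    have h := (summable_g hc).mul_of_nonneg ih
      (fun t => (Real.exp_pos _).le)
      (fun z => Finset.prod_nonneg fun i _ => (Real.exp_pos _).le)
    have := ((Fin.consEquiv fun _ => ℤ).symm.summable_iff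
      (f := fun p : ℤ × (Fin d → ℤ) => Real.exp (-c * |(p.1 : ℝ)|) *
        ∏ i, Real.exp (-c * |(p.2 i : ℝ)|))).mpr h
    refine this.congr fun z => ?_
    rw [Fin.prod_univ_succ]
    rfl

/-- permanent-style sum over permutations is at most the product of column sums. -/
lemma perm_sum_le_prod {n : ℕ} (A : Matrix (Fin n) (Fin n) ℝ)
    (hA : ∀ j k, 0 ≤ A j k) :
    ∑ σ : Equiv.Perm (Fin n), ∏ i, A (σ i) i ≤ ∏ i, ∑ k, A k i := by
  classical
  rw [Finset.prod_univ_sum]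
  have himg : ∑ σ : Equiv.Perm (Fin n), ∏ i, A (σ i) i =
      ∑ f ∈ Finset.univ.image (fun σ : Equiv.Perm (Fin n) => ⇑σ), ∏ i, A (f i) i := by
    rw [Finset.sum_image (by intro σ _ τ _ h; exact Equiv.coe_fn_injective h)]
  rw [himg]
  apply Finset.sum_le_sum_of_subset_of_nonneg
  · intro f _
    exact Fintype.mem_piFinset.mpr fun i => Finset.mem_univ _
  · intro f _ _
    exact Finset.prod_nonneg fun i _ => hA _ _

theorem permanent_bound {d : ℕ} (hd : 1 ≤ d) (μ C : ℝ) (hμ : 0 < μ) (hC : 0 < C) :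
    ∃ C' : ℝ, 0 < C' ∧ ∀ (n : ℕ) (x y : Fin n → Fin d → ℤ),
      Function.Injective x → Function.Injective y →
      ∀ M : Matrix (Fin n) (Fin n) ℝ,
      (∀ j k, 0 ≤ M j k) →
      (∀ j k, M j k ≤ C * Real.exp (-μ * ed (x j) (y k))) →
      M.permanent ≤ C' ^ n * Real.exp (-(μ / (2 * Real.sqrt d)) * Ds x y) := by
  classical
  have hsd1 : (1:ℝ) ≤ Real.sqrt d := by
    rw [show (1:ℝ) = Real.sqrt 1 by simp]
    exact Real.sqrt_le_sqrt (by exact_mod_cast hd)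
  have hsd0 : 0 < Real.sqrt d := lt_of_lt_of_le one_pos hsd1
  set c : ℝ := μ / (2 * Real.sqrt d) with hc_def
  have hc : 0 < c := by positivity
  have hcμ : c * Real.sqrt d = μ / 2 := by
    field_simp [hc_def]
    rw [hc_def]; field_simp
  have hC2 : c ≤ μ / 2 := by
    rw [← hcμ]
    nlinarith [hc.le]
  set G : (Fin d → ℤ) → ℝ := fun z => ∏ i, Real.exp (-c * |(z i : ℝ)|) with hG_def
  have hG0 : ∀ z, 0 ≤ G z := fun z => Finset.prod_nonneg fun i _ => (Real.exp_pos _).le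
  have hGsum : Summable G := summable_G hc d
  set K : ℝ := ∑' z, G z with hK_def
  have hK0 : 0 ≤ K := tsum_nonneg hG0
  refine ⟨C * (K + 1), by positivity, ?_⟩
  intro n x y hx hy M hM0 hMle
  -- distances are nonnegative
  have hS0 : ∀ σ : Equiv.Perm (Fin n), 0 ≤ ∑ i, ed (x (σ i)) (y i) :=
    fun σ => Finset.sum_nonneg fun i _ => ed_nonneg _ _
  have hDs0 : 0 ≤ Ds x y :=
    Finset.le_inf' _ _ fun σ _ => Finset.sum_nonneg fun j _ => ed_nonneg _ _
  have hDs_le : ∀ σ : Equiv.Perm (Fin n), Ds x y ≤ ∑ i, ed (x (σ i)) (y i) := by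
    intro σ
    have h1 : Ds x y ≤ ∑ j, ed (x j) (y (σ⁻¹ j)) :=
      Finset.inf'_le _ (Finset.mem_univ σ⁻¹)
    have h2 : ∑ j, ed (x j) (y (σ⁻¹ j)) = ∑ i, ed (x (σ i)) (y i) := by
      rw [← Equiv.sum_comp σ (fun j => ed (x j) (y (σ⁻¹ j)))]
      exact Finset.sum_congr rfl fun i _ => by rw [← Equiv.Perm.mul_apply, inv_mul_cancel, Equiv.Perm.one_apply]
    rw [← h2]; exact h1
  -- row sums bound
  have hrow : ∀ i : Fin n, ∑ j, Real.exp (-(μ/2) * ed (x j) (y i)) ≤ K := by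
    intro i
    have hterm : ∀ j, Real.exp (-(μ/2) * ed (x j) (y i)) ≤ G (fun l => x j l - y i l) := by
      intro j
      have hl1 : ∑ l, |((x j l : ℝ) - (y i l : ℝ))| ≤ Real.sqrt d * ed (x j) (y i) :=
        l1_le_sqrt_mul_ed _ _
      have : -(μ/2) * ed (x j) (y i) ≤ -c * ∑ l, |((x j l : ℝ) - (y i l : ℝ))| := by
        have : c * ∑ l, |((x j l : ℝ) - (y i l : ℝ))| ≤ μ / 2 * ed (x j) (y i) := by
          calc c * ∑ l, |((x j l : ℝ) - (y i l : ℝ))|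
              ≤ c * (Real.sqrt d * ed (x j) (y i)) := by
                exact mul_le_mul_of_nonneg_left hl1 hc.le
            _ = (c * Real.sqrt d) * ed (x j) (y i) := by ring
            _ = μ / 2 * ed (x j) (y i) := by rw [hcμ]
        linarith
      calc Real.exp (-(μ/2) * ed (x j) (y i))
          ≤ Real.exp (-c * ∑ l, |((x j l : ℝ) - (y i l : ℝ))|) := Real.exp_le_exp.mpr this
        _ = G (fun l => x j l - y i l) := by
            rw [hG_def, Finset.mul_sum, Real.exp_sum]
            refine Finset.prod_congr rfl fun l _ => ?_
            push_cast
            rfl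
    calc ∑ j, Real.exp (-(μ/2) * ed (x j) (y i)) ≤ ∑ j, G (fun l => x j l - y i l) :=
          Finset.sum_le_sum fun j _ => hterm j
      _ = ∑ z ∈ Finset.univ.image (fun j => (fun l => x j l - y i l)), G z := by
          rw [Finset.sum_image]
          intro a _ b _ h
          apply hx
          funext l
          have := congrFun h l
          beta_reduce at this
          omega
      _ ≤ K := Summable.sum_le_tsum _ (fun z _ => hG0 z) hGsum
  -- main chain
  have hstep1 : M.permanent ≤ ∑ σ : Equiv.Perm (Fin n),
      C ^ n * Real.exp (-μ * ∑ i, ed (x (σ i)) (y i)) := by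
    rw [Matrix.permanent]
    refine Finset.sum_le_sum fun σ _ => ?_
    calc ∏ i, M (σ i) i ≤ ∏ i, (C * Real.exp (-μ * ed (x (σ i)) (y i))) :=
          Finset.prod_le_prod (fun i _ => hM0 _ _) (fun i _ => hMle _ _)
      _ = C ^ n * Real.exp (-μ * ∑ i, ed (x (σ i)) (y i)) := by
          rw [Finset.prod_mul_distrib, Finset.prod_const, Finset.card_univ,
            Fintype.card_fin, Finset.mul_sum, Real.exp_sum]
  have hstep2 : ∀ σ : Equiv.Perm (Fin n),
      C ^ n * Real.exp (-μ * ∑ i, ed (x (σ i)) (y i)) ≤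
      C ^ n * Real.exp (-c * Ds x y) * Real.exp (-(μ/2) * ∑ i, ed (x (σ i)) (y i)) := by
    intro σ
    have h1 : Real.exp (-μ * ∑ i, ed (x (σ i)) (y i)) =
        Real.exp (-(μ/2) * ∑ i, ed (x (σ i)) (y i)) *
        Real.exp (-(μ/2) * ∑ i, ed (x (σ i)) (y i)) := by
      rw [← Real.exp_add]; ring_nf
    have h2 : Real.exp (-(μ/2) * ∑ i, ed (x (σ i)) (y i)) ≤ Real.exp (-c * Ds x y) := by
      apply Real.exp_le_exp.mpr
      have := hDs_le σ
      nlinarith [hS0 σ, hDs0, hc.le]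
    rw [h1]
    have hCpow : (0:ℝ) ≤ C ^ n := by positivity
    calc C ^ n * (Real.exp (-(μ/2) * ∑ i, ed (x (σ i)) (y i)) *
          Real.exp (-(μ/2) * ∑ i, ed (x (σ i)) (y i)))
        ≤ C ^ n * (Real.exp (-c * Ds x y) *
          Real.exp (-(μ/2) * ∑ i, ed (x (σ i)) (y i))) := by
          apply mul_le_mul_of_nonneg_left _ hCpow
          exact mul_le_mul_of_nonneg_right h2 (Real.exp_pos _).le
      _ = C ^ n * Real.exp (-c * Ds x y) * Real.exp (-(μ/2) * ∑ i, ed (x (σ i)) (y i)) := by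
          ring
  have hstep3 : ∑ σ : Equiv.Perm (Fin n), Real.exp (-(μ/2) * ∑ i, ed (x (σ i)) (y i)) ≤
      (K + 1) ^ n := by
    have heq : ∀ σ : Equiv.Perm (Fin n),
        Real.exp (-(μ/2) * ∑ i, ed (x (σ i)) (y i)) =
        ∏ i, Real.exp (-(μ/2) * ed (x (σ i)) (y i)) := by
      intro σ
      rw [Finset.mul_sum, Real.exp_sum]
    calc ∑ σ : Equiv.Perm (Fin n), Real.exp (-(μ/2) * ∑ i, ed (x (σ i)) (y i))
        = ∑ σ : Equiv.Perm (Fin n), ∏ i, Real.exp (-(μ/2) * ed (x (σ i)) (y i)) :=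
          Finset.sum_congr rfl fun σ _ => heq σ
      _ ≤ ∏ i, ∑ j, Real.exp (-(μ/2) * ed (x j) (y i)) :=
          perm_sum_le_prod (fun j i => Real.exp (-(μ/2) * ed (x j) (y i)))
            (fun j i => (Real.exp_pos _).le)
      _ ≤ ∏ _i : Fin n, (K + 1) := by
          apply Finset.prod_le_prod
          · intro i _; exact Finset.sum_nonneg fun j _ => (Real.exp_pos _).le
          · intro i _; linarith [hrow i]
      _ = (K + 1) ^ n := by rw [Finset.prod_const, Finset.card_univ, Fintype.card_fin]
  calc M.permanent
      ≤ ∑ σ : Equiv.Perm (Fin n), C ^ n * Real.exp (-μ * ∑ i, ed (x (σ i)) (y i)) := hstep1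
    _ ≤ ∑ σ : Equiv.Perm (Fin n), C ^ n * Real.exp (-c * Ds x y) *
          Real.exp (-(μ/2) * ∑ i, ed (x (σ i)) (y i)) :=
        Finset.sum_le_sum fun σ _ => hstep2 σ
    _ = C ^ n * Real.exp (-c * Ds x y) *
          ∑ σ : Equiv.Perm (Fin n), Real.exp (-(μ/2) * ∑ i, ed (x (σ i)) (y i)) := by
        rw [Finset.mul_sum]
    _ ≤ C ^ n * Real.exp (-c * Ds x y) * (K + 1) ^ n := by
        apply mul_le_mul_of_nonneg_left hstep3
        positivity
    _ = (C * (K + 1)) ^ n * Real.exp (-(μ / (2 * Real.sqrt d)) * Ds x y) := by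
        rw [mul_pow, hc_def]
        ring
end
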